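/- arXiv:2007.11277 — 4 statements merged into one kernel-verified Lean document; each statement's English description precedes it below -/
import Mathlib

section
/- Let E be a Fréchet space (a complete metrizable locally convex space), a < b real numbers, and γ : [a,b] → E a Borel measurable function with separable image such that ∫_[a,b] q(γ(t)) dt < ∞ for every continuous seminorm q on E. Then for every continuous seminorm q on E and every ε > 0, there exists a staircase function η : [a,b] → E (i.e., a function constant on the open subintervals of some finite partition a = t₀ < t₁ < ⋯ < tₙ = b) such that η([a,b]) ⊆ γ([a,b]) and ∫_[a,b] q(γ(t) − η(t)) dt ≤ ε. -/
/-!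
Choose a dense sequence `e` in the image of `γ`. For a small `δ > 0`, send a point `t` to the first
`e k` (`k < N`) with `q (γ t - e k) < δ`, and to a fixed value `c` of `γ` if there is none; for
large `N` the points falling into the last case carry little of the integral of `q ∘ γ`, so this
finitely valued function is `q`-close to `γ` in `L¹`. Replacing each of the finitely many sets
`{t | q (γ t - e k) < δ}` by a finite union of open intervals that is close to it in measure
changes the function only on a set of small measure, where it is bounded, and the result is a
staircase function whose breakpoints are the endpoints of the intervals.
-/

open MeasureTheory

/-- A staircase function on `[a,b]`: constant on the open subintervals of some
finite partition `a = t₀ < t₁ < ⋯ < tₙ = b`. -/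
def IsStaircaseOn {E : Type*} (a b : ℝ) (η : ℝ → E) : Prop :=
  ∃ (n : ℕ) (t : Fin (n + 1) → ℝ), StrictMono t ∧ t 0 = a ∧ t (Fin.last n) = b ∧
    ∀ i : Fin n, ∃ c : E, ∀ x ∈ Set.Ioo (t i.castSucc) (t i.succ), η x = c

open Set Filter Topology
open scoped ENNReal symmDiff

section SeqPiecewise

variable {α E : Type*}

open Classical in
/-- `seqPiecewise N V e c` is `e k` on `V k \ (V 0 ∪ ⋯ ∪ V (k - 1))` for `k < N`, and `c` outside
`V 0 ∪ ⋯ ∪ V (N - 1)`. -/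
noncomputable def seqPiecewise : ℕ → (ℕ → Set α) → (ℕ → E) → E → α → E
  | 0, _, _, c => fun _ => c
  | N + 1, V, e, c => fun x =>
      if x ∈ V 0 then e 0 else seqPiecewise N (fun k => V (k + 1)) (fun k => e (k + 1)) c x

variable {N : ℕ} {V W : ℕ → Set α} {e : ℕ → E} {c : E} {x y : α}

theorem seqPiecewise_congr (h : ∀ k < N, (x ∈ V k ↔ y ∈ W k)) :
    seqPiecewise N V e c x = seqPiecewise N W e c y := by
  induction N generalizing V W e with
  | zero => rfl
  | succ N ih =>
    have h0 := h 0 N.succ_pos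
    by_cases hx : x ∈ V 0
    · simp only [seqPiecewise, if_pos hx, if_pos (h0.1 hx)]
    · simp only [seqPiecewise, if_neg hx, if_neg (mt h0.2 hx)]
      exact ih fun k hk => h (k + 1) (by omega)

theorem seqPiecewise_eqOn_compl_biUnion_symmDiff :
    EqOn (seqPiecewise N V e c) (seqPiecewise N W e c) (⋃ k ∈ Finset.range N, V k ∆ W k)ᶜ :=
  fun x hx => seqPiecewise_congr fun k hk => by
    simp only [mem_compl_iff, mem_iUnion₂, Finset.mem_range, mem_symmDiff, not_exists] at hx
    have := hx k hk
    tauto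

theorem seqPiecewise_mem_insert_image (N : ℕ) (V : ℕ → Set α) (e : ℕ → E) (c : E) (x : α) :
    seqPiecewise N V e c x ∈ insert c (e '' Iio N) := by
  induction N generalizing V e with
  | zero => exact mem_insert c _
  | succ N ih =>
    simp only [seqPiecewise]
    split_ifs
    · exact mem_insert_of_mem _ ⟨0, N.succ_pos, rfl⟩
    · obtain h | ⟨k, hk, hke⟩ := ih (fun k => V (k + 1)) (fun k => e (k + 1))
      · exact Or.inl h
      · exact Or.inr ⟨k + 1, Nat.succ_lt_succ hk, hke⟩

theorem seqPiecewise_of_notMem_biUnion (hx : x ∉ ⋃ k ∈ Finset.range N, V k) :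
    seqPiecewise N V e c x = c := by
  simp only [mem_iUnion₂, Finset.mem_range, not_exists] at hx
  induction N generalizing V e with
  | zero => rfl
  | succ N ih =>
    simp only [seqPiecewise, if_neg (hx 0 N.succ_pos)]
    exact ih fun k hk => hx (k + 1) (by omega)

theorem exists_seqPiecewise_eq_of_mem_biUnion (hx : x ∈ ⋃ k ∈ Finset.range N, V k) :
    ∃ k, x ∈ V k ∧ seqPiecewise N V e c x = e k := by
  simp only [mem_iUnion₂, Finset.mem_range] at hx
  induction N generalizing V e with
  | zero => simp at hx
  | succ N ih =>
    simp only [seqPiecewise]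
    split_ifs with h0
    · exact ⟨0, h0, rfl⟩
    · obtain ⟨_ | k, hk, hxk⟩ := hx
      · exact absurd hxk h0
      · obtain ⟨j, hj, hje⟩ := ih (V := fun k => V (k + 1)) (e := fun k => e (k + 1))
          ⟨k, by omega, hxk⟩
        exact ⟨j + 1, hj, hje⟩

theorem MeasureTheory.StronglyMeasurable.seqPiecewise [MeasurableSpace α] [TopologicalSpace E]
    (hV : ∀ k, MeasurableSet (V k)) : StronglyMeasurable (seqPiecewise N V e c) := by
  induction N generalizing V e with
  | zero => exact stronglyMeasurable_const
  | succ N ih => exact .ite (hV 0) stronglyMeasurable_const (ih fun k => hV (k + 1))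

end SeqPiecewise

section Staircase

variable {E : Type*}

def unionIoo {β : Type*} [Preorder β] (F : Finset (β × β)) : Set β := ⋃ p ∈ F, Ioo p.1 p.2

theorem isOpen_unionIoo {β : Type*} [LinearOrder β] [TopologicalSpace β] [OrderClosedTopology β]
    (F : Finset (β × β)) : IsOpen (unionIoo F) :=
  isOpen_biUnion fun _ _ => isOpen_Ioo

theorem Set.OrdConnected.mem_Ioo_iff {β : Type*} [LinearOrder β] {I : Set β} (hI : I.OrdConnected)
    {u v x y : β} (hu : u ∉ I) (hv : v ∉ I) (hx : x ∈ I) (hy : y ∈ I) :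
    x ∈ Ioo u v ↔ y ∈ Ioo u v := by
  suffices key : ∀ {x y}, x ∈ I → y ∈ I → x ∈ Ioo u v → y ∈ Ioo u v from
    ⟨key hx hy, key hy hx⟩
  rintro x y hx hy ⟨hux, hxv⟩
  exact ⟨lt_of_not_ge fun hyu => hu (hI.out hy hx ⟨hyu, hux.le⟩),
    lt_of_not_ge fun hvy => hv (hI.out hx hy ⟨hxv.le, hvy⟩)⟩

/-- The partition consists of `a`, `b` and the points of `P` between them, in increasing order. -/
theorem isStaircaseOn_of_finset {a b : ℝ} (hab : a ≤ b) {η : ℝ → E} (P : Finset ℝ)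
    (hη : ∀ u v, (∀ p ∈ P, p ∉ Ioo u v) → ∀ x ∈ Ioo u v, ∀ y ∈ Ioo u v, η x = η y) :
    IsStaircaseOn a b η := by
  classical
  set Q := insert a (insert b (P.filter (· ∈ Ioo a b)))
  have hQ : ∀ x ∈ Q, x ∈ Icc a b := by
    simp only [Q, Finset.mem_insert, Finset.mem_filter]
    rintro x (rfl | rfl | ⟨-, hx⟩)
    exacts [left_mem_Icc.2 hab, right_mem_Icc.2 hab, Ioo_subset_Icc_self hx]
  obtain ⟨n, hn⟩ : ∃ n, Q.card = n + 1 :=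
    Nat.exists_eq_add_one.2 (Finset.card_pos.2 ⟨a, Finset.mem_insert_self _ _⟩)
  set t := Q.orderEmbOfFin hn
  have ht0 : t 0 = a := (Q.orderEmbOfFin_zero hn n.succ_pos).trans <|
    le_antisymm (Q.min'_le a (Finset.mem_insert_self _ _)) (Q.le_min' _ _ fun x hx => (hQ x hx).1)
  have htn : t (Fin.last n) = b := (Q.orderEmbOfFin_last hn n.succ_pos).trans <|
    le_antisymm (Q.max'_le _ _ fun x hx => (hQ x hx).2) (Q.le_max' b (by simp [Q]))
  refine ⟨n, t, t.strictMono, ht0, htn, fun i => ⟨η ((t i.castSucc + t i.succ) / 2), ?_⟩⟩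
  have hlt : t i.castSucc < t i.succ := t.strictMono Fin.castSucc_lt_succ
  refine fun x hx => hη _ _ (fun p hp hpi => ?_) x hx _ ⟨by linarith, by linarith⟩
  have hpQ : p ∈ Q := by
    refine Finset.mem_insert_of_mem (Finset.mem_insert_of_mem (Finset.mem_filter.2 ⟨hp, ?_, ?_⟩))
    · exact ht0 ▸ (t.monotone (Fin.zero_le _)).trans_lt hpi.1
    · exact htn ▸ hpi.2.trans_le (t.monotone (Fin.le_last _))
  obtain ⟨j, rfl⟩ : p ∈ range t := (Q.range_orderEmbOfFin hn).symm ▸ hpQ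
  exact (Fin.castSucc_lt_iff_succ_le.1 (t.lt_iff_lt.1 hpi.1)).not_gt (t.lt_iff_lt.1 hpi.2)

theorem isStaircaseOn_seqPiecewise_unionIoo {a b : ℝ} (hab : a ≤ b) (N : ℕ)
    (F : ℕ → Finset (ℝ × ℝ)) (e : ℕ → E) (c : E) :
    IsStaircaseOn a b (seqPiecewise N (fun k => unionIoo (F k)) e c) := by
  classical
  refine isStaircaseOn_of_finset hab
    ((Finset.range N).biUnion fun k => (F k).image Prod.fst ∪ (F k).image Prod.snd)
    fun u v hP x hx y hy => seqPiecewise_congr fun k hk => ?_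
  have hend : ∀ p ∈ F k, p.1 ∉ Ioo u v ∧ p.2 ∉ Ioo u v := fun p hp =>
    ⟨hP _ (Finset.mem_biUnion.2 ⟨k, Finset.mem_range.2 hk,
        Finset.mem_union_left _ (Finset.mem_image_of_mem Prod.fst hp)⟩),
      hP _ (Finset.mem_biUnion.2 ⟨k, Finset.mem_range.2 hk,
        Finset.mem_union_right _ (Finset.mem_image_of_mem Prod.snd hp)⟩)⟩
  simp only [unionIoo, mem_iUnion₂]
  exact exists₂_congr fun p hp => ordConnected_Ioo.mem_Ioo_iff (hend p hp).1 (hend p hp).2 hx hy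

end Staircase

theorem TopologicalSpace.IsSeparable.exists_seq_dense {X : Type*} [TopologicalSpace X]
    [TopologicalSpace.PseudoMetrizableSpace X] {s : Set X} (hs : TopologicalSpace.IsSeparable s)
    (hne : s.Nonempty) : ∃ e : ℕ → X, range e ⊆ s ∧ s ⊆ closure (range e) := by
  obtain ⟨t, hts, htc, hst⟩ := hs.exists_countable_dense_subset
  obtain ⟨e, rfl⟩ := htc.exists_eq_range (closure_nonempty_iff.1 (hne.mono hst))
  exact ⟨e, hts, hst⟩

section Approximation

variable {α E : Type*}

theorem exists_finset_measure_symmDiff_unionIoo_lt {μ : Measure ℝ} [μ.Regular] {A : Set ℝ}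
    (hA : MeasurableSet A) (hμA : μ A ≠ ∞) {δ : ℝ≥0∞} (hδ : δ ≠ 0) :
    ∃ F : Finset (ℝ × ℝ), μ (A ∆ unionIoo F) < δ := by
  have hδ2 : δ / 2 ≠ 0 := ENNReal.div_ne_zero.2 ⟨hδ, ENNReal.ofNat_ne_top⟩
  obtain ⟨U, hAU, hUo, -, hUA⟩ := hA.exists_isOpen_sdiff_lt hμA hδ2
  obtain ⟨K, hKA, hKc, hAK⟩ := hA.exists_isCompact_sdiff_lt hμA hδ2
  have hcover : K ⊆ ⋃ p ∈ {p : ℝ × ℝ | Ioo p.1 p.2 ⊆ U}, Ioo p.1 p.2 := fun x hx => by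
    obtain ⟨l, u, hx, hlu⟩ := mem_nhds_iff_exists_Ioo_subset.1 (hUo.mem_nhds (hAU (hKA hx)))
    exact mem_biUnion (x := (l, u)) hlu hx
  obtain ⟨F, hFU, hF, hKF⟩ := hKc.elim_finite_subcover_image (fun _ _ => isOpen_Ioo) hcover
  refine ⟨hF.toFinset, ?_⟩
  have hVU : unionIoo hF.toFinset ⊆ U := iUnion₂_subset fun p hp => hFU (hF.mem_toFinset.1 hp)
  have hKV : K ⊆ unionIoo hF.toFinset := by simpa [unionIoo] using hKF
  calc μ (A ∆ unionIoo hF.toFinset) ≤ μ ((A \ K) ∪ (U \ A)) :=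
        measure_mono <|
          union_subset_union (sdiff_subset_sdiff_right hKV) (sdiff_subset_sdiff_left hVU)
    _ ≤ μ (A \ K) + μ (U \ A) := measure_union_le _ _
    _ < δ / 2 + δ / 2 := ENNReal.add_lt_add hAK hUA
    _ = δ := ENNReal.add_halves δ

theorem exists_measure_biUnion_symmDiff_unionIoo_le {μ : Measure ℝ} [IsFiniteMeasure μ]
    [μ.Regular] {B : ℕ → Set ℝ} (hB : ∀ k, MeasurableSet (B k)) (N : ℕ) {δ : ℝ≥0∞} (hδ : δ ≠ 0) :
    ∃ F : ℕ → Finset (ℝ × ℝ), μ (⋃ k ∈ Finset.range N, B k ∆ unionIoo (F k)) ≤ δ := by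
  choose F hF using fun k => exists_finset_measure_symmDiff_unionIoo_lt (hB k)
    (measure_ne_top μ (B k)) (ENNReal.div_pos hδ (ENNReal.natCast_ne_top N)).ne'
  refine ⟨F, ?_⟩
  calc μ (⋃ k ∈ Finset.range N, B k ∆ unionIoo (F k))
      ≤ ∑ k ∈ Finset.range N, μ (B k ∆ unionIoo (F k)) := measure_biUnion_finset_le _ _
    _ ≤ ∑ _k ∈ Finset.range N, δ / N := Finset.sum_le_sum fun k _ => (hF k).le
    _ = N * (δ / N) := by simp
    _ ≤ δ := ENNReal.mul_div_le

theorem seminorm_sub_seqPiecewise_le [AddCommGroup E] [Module ℝ E] (q : Seminorm ℝ E) (f : α → E)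
    (e : ℕ → E) (c : E) {δ : ℝ} (hδ : 0 ≤ δ) (N : ℕ) (x : α) :
    q (f x - seqPiecewise N (fun k => {x | q (f x - e k) < δ}) e c x) ≤
      δ + (⋃ k ∈ Finset.range N, {x | q (f x - e k) < δ})ᶜ.indicator (fun x => q (f x - c)) x := by
  by_cases hx : x ∈ (⋃ k ∈ Finset.range N, {x | q (f x - e k) < δ})
  · obtain ⟨k, hxk, hk⟩ := exists_seqPiecewise_eq_of_mem_biUnion (e := e) (c := c) hx
    rw [hk, indicator_of_notMem (not_not.2 hx), add_zero]
    exact hxk.le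
  · rw [seqPiecewise_of_notMem_biUnion hx, indicator_of_mem hx]
    linarith

variable [MeasurableSpace α] {μ : Measure α} [AddCommGroup E] [Module ℝ E]

theorem integral_seminorm_sub_le_add (q : Seminorm ℝ E) {f g h : α → E}
    (hfg : Integrable (fun x => q (f x - g x)) μ) (hgh : Integrable (fun x => q (g x - h x)) μ) :
    ∫ x, q (f x - h x) ∂μ ≤ ∫ x, q (f x - g x) ∂μ + ∫ x, q (g x - h x) ∂μ := by
  rw [← integral_add hfg hgh]
  refine integral_mono_of_nonneg (ae_of_all _ fun x => apply_nonneg q _) (hfg.add hgh)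
    (ae_of_all _ fun x => ?_)
  simpa using map_add_le_add q (f x - g x) (g x - h x)

theorem integral_seminorm_sub_le_of_eqOn_compl [IsFiniteMeasure μ] (q : Seminorm ℝ E)
    {f h : α → E} {s : Set α} (hs : MeasurableSet s) {M : ℝ} (hf : ∀ x, q (f x) ≤ M)
    (hh : ∀ x, q (h x) ≤ M) (hfh : EqOn f h sᶜ) :
    ∫ x, q (f x - h x) ∂μ ≤ 2 * M * μ.real s := by
  calc ∫ x, q (f x - h x) ∂μ ≤ ∫ x, s.indicator (fun _ => 2 * M) x ∂μ := by
        refine integral_mono_of_nonneg (ae_of_all _ fun x => apply_nonneg q _)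
          ((integrable_const _).indicator hs) (ae_of_all _ fun x => ?_)
        by_cases hx : x ∈ s
        · rw [indicator_of_mem hx]
          linarith [map_sub_le_add q (f x) (h x), hf x, hh x]
        · simp only [indicator_of_notMem hx, hfh hx, sub_self, map_zero, le_refl]
    _ = 2 * M * μ.real s := by rw [integral_indicator_const _ hs, smul_eq_mul, mul_comm]

theorem tendsto_setIntegral_compl_biUnion_range {G : Type*} [NormedAddCommGroup G]
    [NormedSpace ℝ G] {B : ℕ → Set α} (hB : ∀ k, MeasurableSet (B k)) (hcover : ∀ x, ∃ k, x ∈ B k)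
    {h : α → G} (hh : Integrable h μ) :
    Tendsto (fun N => ∫ x in (⋃ k ∈ Finset.range N, B k)ᶜ, h x ∂μ) atTop (𝓝 0) := by
  have hempty : ⋂ N, (⋃ k ∈ Finset.range N, B k)ᶜ = ∅ := eq_empty_of_forall_notMem fun x hx => by
    obtain ⟨k, hk⟩ := hcover x
    exact mem_iInter.1 hx (k + 1) (mem_biUnion (Finset.mem_range.2 k.lt_succ_self) hk)
  have hlim := tendsto_setIntegral_of_antitone (f := h)
    (fun N => (Finset.measurableSet_biUnion _ fun k _ => hB k).compl)
    (fun m n hmn => compl_subset_compl.2 (iUnion₂_mono' fun k hk =>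
      ⟨k, Finset.mem_range.2 ((Finset.mem_range.1 hk).trans_le hmn), subset_rfl⟩))
    ⟨0, hh.integrableOn⟩
  rwa [hempty, Measure.restrict_empty, integral_zero_measure] at hlim

variable [TopologicalSpace E] [ContinuousSub E]

theorem exists_seminorm_sub_lt_of_mem_closure_range {q : Seminorm ℝ E} (hq : Continuous q)
    {e : ℕ → E} {y : E} (hy : y ∈ closure (range e)) {δ : ℝ} (hδ : 0 < δ) :
    ∃ k, q (y - e k) < δ := by
  obtain ⟨-, hz, k, rfl⟩ := mem_closure_iff.1 hy {z | q (y - z) < δ}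
    (isOpen_lt (hq.comp (continuous_const.sub continuous_id)) continuous_const) (by simpa)
  exact ⟨k, hz⟩

theorem exists_seqPiecewise_integral_seminorm_sub_lt [IsFiniteMeasure μ] {q : Seminorm ℝ E}
    (hq : Continuous q) {f : α → E} (hf : StronglyMeasurable f)
    (hqf : Integrable (fun x => q (f x)) μ) {e : ℕ → E} (he : ∀ x, f x ∈ closure (range e))
    (c : E) {ε : ℝ} (hε : 0 < ε) :
    ∃ (B : ℕ → Set α) (N : ℕ), (∀ k, MeasurableSet (B k)) ∧
      Integrable (fun x => q (f x - seqPiecewise N B e c x)) μ ∧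
      ∫ x, q (f x - seqPiecewise N B e c x) ∂μ < ε := by
  set δ := ε / (2 * (μ.real univ + 1))
  have hδ : 0 < δ := by positivity
  have hδμ : δ * μ.real univ ≤ ε / 2 := by
    rw [div_mul_eq_mul_div, div_le_div_iff₀ (by positivity) two_pos]
    nlinarith [measureReal_nonneg (μ := μ) (s := univ)]
  have hqf_sub : ∀ y, StronglyMeasurable fun x => q (f x - y) := fun y =>
    hq.comp_stronglyMeasurable (hf.sub stronglyMeasurable_const)
  set B : ℕ → Set α := fun k => {x | q (f x - e k) < δ}
  have hB : ∀ k, MeasurableSet (B k) := fun k =>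
    measurableSet_lt (hqf_sub _).measurable measurable_const
  have hqfc : Integrable (fun x => q (f x - c)) μ :=
    (hqf.add (integrable_const (q c))).mono' (hqf_sub c).aestronglyMeasurable
      (ae_of_all _ fun x => by
        rw [Real.norm_of_nonneg (apply_nonneg q _)]
        exact map_sub_le_add q (f x) c)
  obtain ⟨N, hN⟩ := ((tendsto_setIntegral_compl_biUnion_range hB
    (fun x => exists_seminorm_sub_lt_of_mem_closure_range hq (he x) hδ) hqfc).eventually
      (gt_mem_nhds (half_pos hε))).exists
  set D := (⋃ k ∈ Finset.range N, B k)ᶜ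
  have hD : MeasurableSet D := (Finset.measurableSet_biUnion _ fun k _ => hB k).compl
  have hG : Integrable (fun x => δ + D.indicator (fun x => q (f x - c)) x) μ :=
    (integrable_const δ).add (hqfc.indicator hD)
  have hle := seminorm_sub_seqPiecewise_le q f e c hδ.le N
  refine ⟨B, N, hB, hG.mono' (hq.comp_stronglyMeasurable
    (hf.sub (.seqPiecewise hB))).aestronglyMeasurable (ae_of_all _ fun x => ?_), ?_⟩
  · rw [Real.norm_of_nonneg (apply_nonneg q _)]
    exact hle x
  calc ∫ x, q (f x - seqPiecewise N B e c x) ∂μ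
      ≤ ∫ x, δ + D.indicator (fun x => q (f x - c)) x ∂μ :=
        integral_mono_of_nonneg (ae_of_all _ fun _ => apply_nonneg q _) hG (ae_of_all _ hle)
    _ = δ * μ.real univ + ∫ x in D, q (f x - c) ∂μ := by
        rw [integral_add (integrable_const _) (hqfc.indicator hD), integral_const,
          integral_indicator hD, smul_eq_mul, mul_comm]
    _ < ε := by linarith

theorem exists_integral_seminorm_seqPiecewise_sub_unionIoo_le {μ : Measure ℝ} [IsFiniteMeasure μ]
    [μ.Regular] {q : Seminorm ℝ E} (hq : Continuous q) {B : ℕ → Set ℝ}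
    (hB : ∀ k, MeasurableSet (B k)) (N : ℕ) (e : ℕ → E) (c : E) {ε : ℝ} (hε : 0 < ε) :
    ∃ F : ℕ → Finset (ℝ × ℝ),
      Integrable (fun x => q (seqPiecewise N B e c x -
        seqPiecewise N (fun k => unionIoo (F k)) e c x)) μ ∧
      ∫ x, q (seqPiecewise N B e c x - seqPiecewise N (fun k => unionIoo (F k)) e c x) ∂μ ≤ ε := by
  obtain ⟨M, hM⟩ := (((finite_Iio N).image e).insert c |>.image q).bddAbove
  have hqM : ∀ (V : ℕ → Set ℝ) x, q (seqPiecewise N V e c x) ≤ M := fun V x =>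
    hM (mem_image_of_mem q (seqPiecewise_mem_insert_image N V e c x))
  have hM0 : 0 ≤ M := (apply_nonneg q _).trans (hqM B 0)
  set δ := ε / (2 * M + 1)
  have hδ : 0 < δ := by positivity
  obtain ⟨F, hbad⟩ := exists_measure_biUnion_symmDiff_unionIoo_le (μ := μ) hB N
    (ENNReal.ofReal_pos.2 hδ).ne'
  refine ⟨F, Integrable.of_bound ?_ (2 * M) (ae_of_all _ fun x => ?_), ?_⟩
  · exact (hq.comp_stronglyMeasurable ((StronglyMeasurable.seqPiecewise hB).sub
      (.seqPiecewise fun k => (isOpen_unionIoo (F k)).measurableSet))).aestronglyMeasurable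
  · rw [Real.norm_of_nonneg (apply_nonneg q _)]
    linarith [map_sub_le_add q (seqPiecewise N B e c x)
      (seqPiecewise N (fun k => unionIoo (F k)) e c x), hqM B x, hqM (fun k => unionIoo (F k)) x]
  calc _ ≤ 2 * M * μ.real (⋃ k ∈ Finset.range N, B k ∆ unionIoo (F k)) :=
      integral_seminorm_sub_le_of_eqOn_compl q
        (Finset.measurableSet_biUnion _ fun k _ =>
          (hB k).symmDiff (isOpen_unionIoo _).measurableSet)
        (hqM B) (hqM _) seqPiecewise_eqOn_compl_biUnion_symmDiff
    _ ≤ 2 * M * δ := by gcongr; exact ENNReal.toReal_le_of_le_ofReal hδ.le hbad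
    _ ≤ ε := by
        rw [mul_div_assoc', div_le_iff₀ (by positivity)]
        nlinarith

end Approximation

theorem staircase_approximation_L1_general
    {E : Type*} [AddCommGroup E] [UniformSpace E] [IsUniformAddGroup E]
    [Module ℝ E] [TopologicalSpace.MetrizableSpace E]
    [MeasurableSpace E] [BorelSpace E]
    (a b : ℝ) (hab : a < b) (γ : ℝ → E)
    (hmeas : Measurable ((Set.Icc a b).restrict γ))
    (hsep : TopologicalSpace.IsSeparable (γ '' Set.Icc a b))
    (hint : ∀ q : Seminorm ℝ E, Continuous q →
      IntegrableOn (fun t => q (γ t)) (Set.Icc a b))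
    (q : Seminorm ℝ E) (hq : Continuous q) (ε : ℝ) (hε : 0 < ε) :
    ∃ η : ℝ → E, IsStaircaseOn a b η ∧
      η '' Set.Icc a b ⊆ γ '' Set.Icc a b ∧
      ∫ t in Set.Icc a b, q (γ t - η t) ≤ ε := by
  set g := IccExtend hab.le fun t : Icc a b => γ t
  have hgγ : EqOn g γ (Icc a b) := fun t ht => IccExtend_of_mem _ _ ht
  have hgS : ∀ t, g t ∈ γ '' Icc a b := fun t => ⟨_, (projIcc a b hab.le t).2, rfl⟩
  have hg : StronglyMeasurable g := stronglyMeasurable_iff_measurable_separable.2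
    ⟨hmeas.comp continuous_projIcc.measurable, hsep.mono (range_subset_iff.2 hgS)⟩
  have hqg : Integrable (fun t => q (g t)) (volume.restrict (Icc a b)) :=
    (hint q hq).congr_fun (fun t ht => by rw [hgγ ht]) measurableSet_Icc
  obtain ⟨e, heS, hSe⟩ := hsep.exists_seq_dense ⟨γ a, a, left_mem_Icc.2 hab.le, rfl⟩
  obtain ⟨B, N, hB, hσi, hσ⟩ := exists_seqPiecewise_integral_seminorm_sub_lt hq hg hqg
    (fun t => hSe (hgS t)) (g a) (half_pos hε)
  obtain ⟨F, hηi, hη⟩ :=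
    exists_integral_seminorm_seqPiecewise_sub_unionIoo_le (μ := volume.restrict (Icc a b)) hq hB N e
      (g a) (half_pos hε)
  refine ⟨_, isStaircaseOn_seqPiecewise_unionIoo hab.le N F e (g a), ?_, ?_⟩
  · rintro _ ⟨t, -, rfl⟩
    obtain h | ⟨k, -, hk⟩ := seqPiecewise_mem_insert_image N (fun k => unionIoo (F k)) e (g a) t
    · exact h.symm ▸ hgS a
    · exact hk ▸ heS (mem_range_self k)
  calc ∫ t in Icc a b, q (γ t - seqPiecewise N (fun k => unionIoo (F k)) e (g a) t)
      = ∫ t in Icc a b, q (g t - seqPiecewise N (fun k => unionIoo (F k)) e (g a) t) :=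
        setIntegral_congr_fun measurableSet_Icc fun t ht => by rw [hgγ ht]
    _ ≤ ε := by linarith [integral_seminorm_sub_le_add q hσi hηi]

/-- Staircase approximation of `L¹`-functions into a Fréchet space, with values
in the image of the approximated function. -/
theorem staircase_approximation_L1
    {E : Type*} [AddCommGroup E] [UniformSpace E] [IsUniformAddGroup E]
    [Module ℝ E] [ContinuousSMul ℝ E] [LocallyConvexSpace ℝ E]
    [CompleteSpace E] [TopologicalSpace.MetrizableSpace E]
    [MeasurableSpace E] [BorelSpace E]
    (a b : ℝ) (hab : a < b) (γ : ℝ → E)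
    (hmeas : Measurable ((Set.Icc a b).restrict γ))
    (hsep : TopologicalSpace.IsSeparable (γ '' Set.Icc a b))
    (hint : ∀ q : Seminorm ℝ E, Continuous q →
      IntegrableOn (fun t => q (γ t)) (Set.Icc a b))
    (q : Seminorm ℝ E) (hq : Continuous q) (ε : ℝ) (hε : 0 < ε) :
    ∃ η : ℝ → E, IsStaircaseOn a b η ∧
      η '' Set.Icc a b ⊆ γ '' Set.Icc a b ∧
      ∫ t in Set.Icc a b, q (γ t - η t) ≤ ε :=
  staircase_approximation_L1_general a b hab γ hmeas hsep hint q hq ε hε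
end

section
/- Let E be a Fréchet space, a < b real numbers, and γ : [a,b] → E an L¹-function. Then for every continuous seminorm q on E and every ε > 0, there exists a continuous function θ : [a,b] → E such that θ([a,b]) is contained in the convex hull of γ([a,b]) and ∫_[a,b] q(γ(t) − θ(t)) dt ≤ ε. -/
/-!
A dense sequence `x` in the separable image of `γ` gives a measurable index map `idx` with
`q (γ t - x (idx t)) < δ` everywhere. Truncating the index (sending indices `≥ n` to `0`) gives
simple functions with values in the image, dominated in `q`-distance by `q ∘ γ + q (x 0) + δ`, so
by dominated convergence one of them is `L¹`-close to `γ`. A simple function is made continuous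
by shrinking its fibres to disjoint closed sets of almost full measure and gluing its values with
a partition of unity subordinate to them: the result is a convex combination of the values and
differs from the simple function only on a set of small measure, where both are bounded.
-/

open MeasureTheory Set TopologicalSpace Filter Topology Function
open scoped ENNReal

namespace MeasureTheory.SimpleFunc

variable {α β : Type*} [MeasurableSpace α] (x : ℕ → β) {idx : α → ℕ} (hidx : Measurable idx)

def compTrunc (n : ℕ) : SimpleFunc α β where
  toFun t := x (if idx t < n then idx t else 0)
  measurableSet_fiber' y := Measurable.ite (hidx measurableSet_Iio) hidx measurable_const
    (MeasurableSet.of_discrete (s := x ⁻¹' {y}))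
  finite_range' := ((finite_Iic n).image x).subset <| range_subset_iff.2 fun t =>
    mem_image_of_mem x <| by split_ifs <;> simp only [mem_Iic] <;> omega

theorem compTrunc_apply (n : ℕ) (t : α) :
    compTrunc x hidx n t = x (if idx t < n then idx t else 0) := rfl

theorem range_compTrunc_subset (n : ℕ) : range (compTrunc x hidx n) ⊆ range x :=
  range_subset_iff.2 fun _ => Set.mem_range_self _

theorem compTrunc_eventually_eq (t : α) : ∀ᶠ n in atTop, compTrunc x hidx n t = x (idx t) :=
  eventually_atTop.2 ⟨idx t + 1, fun _ hn => by rw [compTrunc_apply, if_pos (by omega)]⟩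

end MeasureTheory.SimpleFunc

section

variable {E : Type*} [AddCommGroup E] [Module ℝ E] [TopologicalSpace E]

theorem exists_continuous_mem_convexHull_eqOn_const [ContinuousAdd E] [ContinuousSMul ℝ E]
    {X : Type*} [TopologicalSpace X] [NormalSpace X] {ι : Type*} [Finite ι] [Nonempty ι]
    {F : ι → Set X} (hF : ∀ i, IsClosed (F i)) (hdisj : Pairwise (Disjoint on F)) (x : ι → E) :
    ∃ θ : X → E, Continuous θ ∧ (∀ t, θ t ∈ convexHull ℝ (range x)) ∧
      ∀ i, EqOn θ (fun _ => x i) (F i) := by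
  let U : ι → Set X := fun i => ⋂ j ∈ ({i}ᶜ : Set ι), (F j)ᶜ
  have hU_open : ∀ i, IsOpen (U i) := fun i =>
    (toFinite _).isOpen_biInter fun j _ => (hF j).isOpen_compl
  have hF_U : ∀ i, F i ⊆ U i := fun i t ht =>
    mem_iInter₂.2 fun j hj => disjoint_left.1 (hdisj (Ne.symm hj)) ht
  have hU_cover : univ ⊆ ⋃ i, U i := by
    intro t _
    by_cases h : ∃ i, t ∈ F i
    · obtain ⟨i, hi⟩ := h
      exact mem_iUnion.2 ⟨i, hF_U i hi⟩
    · exact mem_iUnion.2 ⟨Classical.arbitrary ι, mem_iInter₂.2 fun j _ => not_exists.1 h j⟩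
  obtain ⟨ρ, hρ⟩ := PartitionOfUnity.exists_isSubordinate_of_locallyFinite isClosed_univ U
    hU_open (locallyFinite_of_finite U) hU_cover
  have hρ_zero : ∀ i, ∀ t ∈ F i, ∀ j ≠ i, ρ j t = 0 := fun i t ht j hj =>
    image_eq_zero_of_notMem_tsupport fun h => (mem_iInter₂.1 (hρ j h) i (Ne.symm hj)) ht
  refine ⟨fun t => ∑ᶠ i, ρ i t • x i, ρ.continuous_finsum_smul fun _ _ _ => continuousAt_const,
    fun t => ρ.finsum_smul_mem_convex (g := fun i _ => x i) (mem_univ t)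
      (fun i _ => subset_convexHull ℝ _ (mem_range_self i)) (convex_convexHull ℝ _),
    fun i t ht => ?_⟩
  have hρ_one : ρ i t = 1 := by
    rw [← ρ.sum_eq_one (mem_univ t), finsum_eq_single _ i (hρ_zero i t ht)]
  simp only
  rw [finsum_eq_single _ i fun j hj => by rw [hρ_zero i t ht j hj, zero_smul], hρ_one, one_smul]

section SimpleApproximation

variable [IsTopologicalAddGroup E] [PseudoMetrizableSpace E] {q : Seminorm ℝ E}

theorem TopologicalSpace.IsSeparable.exists_seq_seminorm_sub_lt {S : Set E} (hS : IsSeparable S)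
    (hne : S.Nonempty) (hq : Continuous q) :
    ∃ x : ℕ → E, (∀ k, x k ∈ S) ∧ ∀ y ∈ S, ∀ δ > 0, ∃ k, q (y - x k) < δ := by
  have := hS.separableSpace
  have := hne.to_subtype
  obtain ⟨u, hu⟩ := exists_dense_seq S
  refine ⟨fun k => u k, fun k => (u k).2, fun y hy δ hδ => ?_⟩
  have hopen : IsOpen {z : S | q (y - z) < δ} :=
    isOpen_lt (hq.comp (continuous_const.sub continuous_subtype_val)) continuous_const
  exact hu.exists_mem_open hopen ⟨⟨y, hy⟩, by simpa using hδ⟩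

variable {α : Type*} [MeasurableSpace α] [Nonempty α] {f : α → E}

theorem MeasureTheory.StronglyMeasurable.exists_measurable_seminorm_sub_lt
    (hf : StronglyMeasurable f) (hq : Continuous q) {δ : ℝ} (hδ : 0 < δ) :
    ∃ x : ℕ → E, (∀ k, x k ∈ range f) ∧
      ∃ idx : α → ℕ, Measurable idx ∧ ∀ t, q (f t - x (idx t)) < δ := by
  classical
  obtain ⟨x, hx_mem, hx_near⟩ :=
    hf.isSeparable_range.exists_seq_seminorm_sub_lt (range_nonempty f) hq
  have hnear : ∀ t, ∃ k, q (f t - x k) < δ := fun t => hx_near _ (mem_range_self t) δ hδ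
  have hnear_meas : ∀ k, MeasurableSet {t | q (f t - x k) < δ} := fun k =>
    measurableSet_lt (hq.comp_stronglyMeasurable (hf.sub stronglyMeasurable_const))
      stronglyMeasurable_const
  exact ⟨x, hx_mem, fun t => Nat.find (hnear t), measurable_find hnear hnear_meas,
    fun t => Nat.find_spec (hnear t)⟩

theorem MeasureTheory.StronglyMeasurable.exists_simpleFunc_integral_seminorm_sub_le
    {μ : Measure α} [IsFiniteMeasure μ] (hf : StronglyMeasurable f) (hq : Continuous q)
    (hqf : Integrable (fun t => q (f t)) μ) {ε : ℝ} (hε : 0 < ε) :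
    ∃ g : SimpleFunc α E, range g ⊆ range f ∧
      Integrable (fun t => q (f t - g t)) μ ∧ ∫ t, q (f t - g t) ∂μ ≤ ε := by
  set δ := ε / (μ.real univ + 1)
  have hδ : 0 < δ := by positivity
  obtain ⟨x, hx_mem, idx, hidx, hx_near⟩ := hf.exists_measurable_seminorm_sub_lt hq hδ
  let g := SimpleFunc.compTrunc x hidx
  let bound : α → ℝ := fun t => q (f t) + q (x 0) + δ
  have hbound : ∀ n t, ‖q (f t - g n t)‖ ≤ bound t := fun n t => by
    rw [Real.norm_of_nonneg (apply_nonneg q _), SimpleFunc.compTrunc_apply]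
    split_ifs
    · linarith [hx_near t, apply_nonneg q (f t), apply_nonneg q (x 0)]
    · linarith [map_sub_le_add q (f t) (x 0)]
  have hbound_int : Integrable bound μ := (hqf.add (integrable_const _)).add (integrable_const _)
  have hg_int : ∀ n, Integrable (fun t => q (f t - g n t)) μ := fun n =>
    hbound_int.mono'
      (hq.comp_stronglyMeasurable (hf.sub (g n).stronglyMeasurable)).aestronglyMeasurable
      (ae_of_all _ (hbound n))
  have hlim : Tendsto (fun n => ∫ t, q (f t - g n t) ∂μ) atTop
      (𝓝 (∫ t, q (f t - x (idx t)) ∂μ)) :=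
    tendsto_integral_of_dominated_convergence bound (fun n => (hg_int n).1) hbound_int
      (fun n => ae_of_all _ (hbound n)) (ae_of_all _ fun t => tendsto_const_nhds.congr' <|
        (SimpleFunc.compTrunc_eventually_eq x hidx t).mono fun n hn => by simp only [g, hn])
  have hlim_lt : ∫ t, q (f t - x (idx t)) ∂μ < ε := by
    calc ∫ t, q (f t - x (idx t)) ∂μ ≤ ∫ _, δ ∂μ :=
          integral_mono_of_nonneg (ae_of_all _ fun t => apply_nonneg q _) (integrable_const δ)
            (ae_of_all _ fun t => (hx_near t).le)
      _ = ε * (μ.real univ / (μ.real univ + 1)) := by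
          rw [integral_const, smul_eq_mul]; ring
      _ < ε := mul_lt_of_lt_one_right hε ((div_lt_one (by positivity)).2 (lt_add_one _))
  obtain ⟨n, hn⟩ := (hlim.eventually_lt_const hlim_lt).exists
  exact ⟨g n, (SimpleFunc.range_compTrunc_subset x hidx n).trans (range_subset_iff.2 hx_mem),
    hg_int n, hn.le⟩

end SimpleApproximation

section ContinuousApproximation

variable {X : Type*} [TopologicalSpace X] [NormalSpace X] [MeasurableSpace X]
  [OpensMeasurableSpace X] [Nonempty X] (μ : Measure X) [IsFiniteMeasure μ] [μ.WeaklyRegular]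

theorem MeasureTheory.SimpleFunc.exists_continuous_mem_convexHull_eqOn_compl
    [ContinuousAdd E] [ContinuousSMul ℝ E] (g : SimpleFunc X E) {η : ℝ≥0∞} (hη : η ≠ 0) :
    ∃ θ : X → E, Continuous θ ∧ (∀ t, θ t ∈ convexHull ℝ (range g)) ∧
      ∃ N, MeasurableSet N ∧ μ N < η ∧ EqOn θ g Nᶜ := by
  have : Finite (range g) := g.finite_range
  obtain ⟨η', hη'_pos, hη'_sum⟩ := ENNReal.exists_pos_sum_of_countable hη (range g)
  have hcore : ∀ y : range g, ∃ F ⊆ g ⁻¹' {y.1}, IsClosed F ∧ μ (g ⁻¹' {y.1} \ F) < η' y :=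
    fun y => (g.measurableSet_fiber y).exists_isClosed_sdiff_lt (measure_ne_top μ _)
      (ENNReal.coe_ne_zero.2 (hη'_pos y).ne')
  choose F hF_sub hF_closed hF_small using hcore
  have hF_disj : Pairwise (Disjoint on F) := fun y z hyz =>
    ((disjoint_singleton.2 (Subtype.coe_ne_coe.2 hyz)).preimage g).mono (hF_sub y) (hF_sub z)
  have : Nonempty (range g) := ⟨⟨g (Classical.arbitrary X), Set.mem_range_self _⟩⟩
  obtain ⟨θ, hθ_cont, hθ_hull, hθ_eq⟩ :=
    exists_continuous_mem_convexHull_eqOn_const hF_closed hF_disj Subtype.val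
  rw [Subtype.range_val] at hθ_hull
  refine ⟨θ, hθ_cont, hθ_hull, ⋃ y, g ⁻¹' {y.1} \ F y,
    MeasurableSet.iUnion fun y => (g.measurableSet_fiber y).diff (hF_closed y).measurableSet,
    ?_, fun t ht => ?_⟩
  · calc μ (⋃ y, g ⁻¹' {y.1} \ F y) ≤ ∑' y, μ (g ⁻¹' {y.1} \ F y) := measure_iUnion_le _
      _ ≤ ∑' y, (η' y : ℝ≥0∞) := ENNReal.tsum_le_tsum fun y => (hF_small y).le
      _ < η := hη'_sum
  · have ht_core : t ∈ F ⟨g t, Set.mem_range_self t⟩ := by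
      by_contra h
      exact ht (mem_iUnion.2 ⟨⟨g t, Set.mem_range_self t⟩, rfl, h⟩)
    exact hθ_eq _ ht_core

variable [IsTopologicalAddGroup E] [ContinuousSMul ℝ E] [PseudoMetrizableSpace E]
  [SecondCountableTopology X] {q : Seminorm ℝ E}

theorem MeasureTheory.SimpleFunc.exists_continuous_integral_seminorm_sub_le
    (g : SimpleFunc X E) (hq : Continuous q) {ε : ℝ} (hε : 0 < ε) :
    ∃ θ : X → E, Continuous θ ∧ (∀ t, θ t ∈ convexHull ℝ (range g)) ∧
      Integrable (fun t => q (g t - θ t)) μ ∧ ∫ t, q (g t - θ t) ∂μ ≤ ε := by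
  set M := ∑ y ∈ g.range, q y
  have hM : ∀ y ∈ range g, q y ≤ M := fun y hy =>
    Finset.single_le_sum (fun z _ => apply_nonneg q z) (g.mem_range.2 hy)
  have hM_nonneg : 0 ≤ M := Finset.sum_nonneg fun y _ => apply_nonneg q y
  obtain ⟨θ, hθ_cont, hθ_hull, N, hN, hN_small, hθ_eq⟩ :=
    g.exists_continuous_mem_convexHull_eqOn_compl μ
      (ENNReal.ofReal_pos.2 (by positivity : 0 < ε / (2 * M + 1))).ne'
  have hθ_le : ∀ t, q (θ t) ≤ M := fun t =>
    q.mem_closedBall_zero.1 (convexHull_min (fun y hy => q.mem_closedBall_zero.2 (hM y hy))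
      (q.convex_closedBall 0 M) (hθ_hull t))
  have hbound : ∀ t, q (g t - θ t) ≤ N.indicator (fun _ => 2 * M) t := fun t => by
    by_cases ht : t ∈ N
    · rw [indicator_of_mem ht]
      linarith [map_sub_le_add q (g t) (θ t), hM _ (Set.mem_range_self t), hθ_le t]
    · rw [indicator_of_notMem ht, hθ_eq ht, sub_self, map_zero]
  have hind_int : Integrable (N.indicator fun _ => 2 * M) μ := (integrable_const _).indicator hN
  have hdiff_meas : StronglyMeasurable fun t => q (g t - θ t) :=
    hq.comp_stronglyMeasurable (g.stronglyMeasurable.sub hθ_cont.stronglyMeasurable)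
  refine ⟨θ, hθ_cont, hθ_hull, hind_int.mono' hdiff_meas.aestronglyMeasurable
    (ae_of_all _ fun t => by rw [Real.norm_of_nonneg (apply_nonneg q _)]; exact hbound t), ?_⟩
  calc ∫ t, q (g t - θ t) ∂μ ≤ ∫ t, N.indicator (fun _ => 2 * M) t ∂μ :=
        integral_mono_of_nonneg (ae_of_all _ fun t => apply_nonneg q _) hind_int
          (ae_of_all _ hbound)
    _ = μ.real N * (2 * M) := by rw [integral_indicator_const _ hN, smul_eq_mul]
    _ ≤ ε / (2 * M + 1) * (2 * M + 1) := by
        gcongr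
        · exact (ENNReal.toReal_lt_of_lt_ofReal hN_small).le
        · linarith
    _ = ε := div_mul_cancel₀ _ (by positivity)

theorem MeasureTheory.StronglyMeasurable.exists_continuous_integral_seminorm_sub_le
    {f : X → E} (hf : StronglyMeasurable f) (hq : Continuous q)
    (hqf : Integrable (fun t => q (f t)) μ) {ε : ℝ} (hε : 0 < ε) :
    ∃ θ : X → E, Continuous θ ∧ (∀ t, θ t ∈ convexHull ℝ (range f)) ∧
      ∫ t, q (f t - θ t) ∂μ ≤ ε := by
  obtain ⟨g, hg_range, hg_int, hg_le⟩ :=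
    hf.exists_simpleFunc_integral_seminorm_sub_le hq hqf (half_pos hε)
  obtain ⟨θ, hθ_cont, hθ_hull, hθ_int, hθ_le⟩ :=
    g.exists_continuous_integral_seminorm_sub_le μ hq (half_pos hε)
  refine ⟨θ, hθ_cont, fun t => convexHull_mono hg_range (hθ_hull t), ?_⟩
  calc ∫ t, q (f t - θ t) ∂μ ≤ ∫ t, (q (f t - g t) + q (g t - θ t)) ∂μ := by
        refine integral_mono_of_nonneg (ae_of_all _ fun t => apply_nonneg q _)
          (hg_int.add hθ_int) (ae_of_all _ fun t => ?_)
        change q (f t - θ t) ≤ q (f t - g t) + q (g t - θ t)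
        rw [← sub_add_sub_cancel (f t) (g t) (θ t)]
        exact map_add_le_add q _ _
    _ = ∫ t, q (f t - g t) ∂μ + ∫ t, q (g t - θ t) ∂μ := integral_add hg_int hθ_int
    _ ≤ ε := by linarith

end ContinuousApproximation

end

theorem continuous_approximation_L1_general
    {E : Type*} [AddCommGroup E] [UniformSpace E] [IsUniformAddGroup E]
    [Module ℝ E] [ContinuousSMul ℝ E]
    [TopologicalSpace.MetrizableSpace E]
    [MeasurableSpace E] [BorelSpace E]
    (a b : ℝ) (hab : a < b) (γ : ℝ → E)
    (hmeas : Measurable ((Set.Icc a b).restrict γ))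
    (hsep : TopologicalSpace.IsSeparable (γ '' Set.Icc a b))
    (hint : ∀ q : Seminorm ℝ E, Continuous q →
      IntegrableOn (fun t => q (γ t)) (Set.Icc a b))
    (q : Seminorm ℝ E) (hq : Continuous q) (ε : ℝ) (hε : 0 < ε) :
    ∃ θ : ℝ → E, ContinuousOn θ (Set.Icc a b) ∧
      θ '' Set.Icc a b ⊆ convexHull ℝ (γ '' Set.Icc a b) ∧
      ∫ t in Set.Icc a b, q (γ t - θ t) ≤ ε := by
  set γ' := (Icc a b).piecewise γ fun _ => γ a
  have hγ'_eq : EqOn γ' γ (Icc a b) := piecewise_eqOn _ _ _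
  have hγ'_meas : Measurable γ' := measurable_of_restrict_of_restrict_compl measurableSet_Icc
    (by rwa [domRestrict_piecewise]) (by rw [domRestrict_piecewise_compl]; exact measurable_const)
  have hγ'_range : range γ' ⊆ γ '' Icc a b := by
    rw [range_piecewise]
    exact union_subset subset_rfl (image_subset_iff.2 fun _ _ =>
      mem_image_of_mem γ (left_mem_Icc.2 hab.le))
  have hγ'_sm : StronglyMeasurable γ' :=
    stronglyMeasurable_iff_measurable_separable.2 ⟨hγ'_meas, hsep.mono hγ'_range⟩
  obtain ⟨θ, hθ_cont, hθ_hull, hθ_le⟩ :=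
    hγ'_sm.exists_continuous_integral_seminorm_sub_le (volume.restrict (Icc a b)) hq
      ((hint q hq).congr_fun (fun t ht => by rw [hγ'_eq ht]) measurableSet_Icc) hε
  refine ⟨θ, hθ_cont.continuousOn, ?_, ?_⟩
  · rintro _ ⟨t, -, rfl⟩
    exact convexHull_mono hγ'_range (hθ_hull t)
  · calc ∫ t in Icc a b, q (γ t - θ t) = ∫ t in Icc a b, q (γ' t - θ t) :=
          setIntegral_congr_fun measurableSet_Icc fun t ht => by rw [hγ'_eq ht]
      _ ≤ ε := hθ_le

/-- Approximation of `L¹`-functions into a Fréchet space by continuous functions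
with values in the convex hull of the image. -/
theorem continuous_approximation_L1
    {E : Type*} [AddCommGroup E] [UniformSpace E] [IsUniformAddGroup E]
    [Module ℝ E] [ContinuousSMul ℝ E] [LocallyConvexSpace ℝ E]
    [CompleteSpace E] [TopologicalSpace.MetrizableSpace E]
    [MeasurableSpace E] [BorelSpace E]
    (a b : ℝ) (hab : a < b) (γ : ℝ → E)
    (hmeas : Measurable ((Set.Icc a b).restrict γ))
    (hsep : TopologicalSpace.IsSeparable (γ '' Set.Icc a b))
    (hint : ∀ q : Seminorm ℝ E, Continuous q →
      IntegrableOn (fun t => q (γ t)) (Set.Icc a b))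
    (q : Seminorm ℝ E) (hq : Continuous q) (ε : ℝ) (hε : 0 < ε) :
    ∃ θ : ℝ → E, ContinuousOn θ (Set.Icc a b) ∧
      θ '' Set.Icc a b ⊆ convexHull ℝ (γ '' Set.Icc a b) ∧
      ∫ t in Set.Icc a b, q (γ t - θ t) ≤ ε :=
  continuous_approximation_L1_general a b hab γ hmeas hsep hint q hq ε hε
end

section
/- Let E be a Fréchet space, J ⊆ ℝ a nondegenerate interval, and f : W → E a function on a subset W ⊆ J × E such that y'(t) = f(t, y(t)) satisfies both local existence and local uniqueness of Carathéodory solutions. Then for every (t₀, y₀) ∈ W, there exists a maximal Carathéodory solution γ : I → E to the initial value problem y'(t) = f(t,y(t)), y(t₀) = y₀, in the sense that every Carathéodory solution η : I_η → E of this initial value problem satisfies I_η ⊆ I and η = γ restricted to I_η. Moreover, I is relatively open in J. -/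
open MeasureTheory

section Defs

variable {E : Type*} [AddCommGroup E] [Module ℝ E] [TopologicalSpace E]
open MeasureTheory

section Defs

variable {E : Type*} [AddCommGroup E] [Module ℝ E] [TopologicalSpace E]

/-- Derivative of a curve into a topological vector space, within a set. -/
def HasTVSDerivWithinAt (η : ℝ → E) (v : E) (I : Set ℝ) (t : ℝ) : Prop :=
  Filter.Tendsto (fun s => (s - t)⁻¹ • (η s - η t)) (nhdsWithin t (I \ {t})) (nhds v)

/-- `γ` is an `L¹`-function on `[a,b]` with values in a Fréchet space: Borel
measurable, with separable image, and with integrable seminorm compositions. -/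
def IsL1On [MeasurableSpace E] (γ : ℝ → E) (a b : ℝ) : Prop :=
  Measurable ((Set.Icc a b).restrict γ) ∧
  TopologicalSpace.IsSeparable (γ '' Set.Icc a b) ∧
  ∀ q : Seminorm ℝ E, Continuous q →
    IntegrableOn (fun t => q (γ t)) (Set.Icc a b)

/-- `η` is absolutely continuous on `[a,b]`: it is a primitive (in the sense of
weak integrals) of an `L¹`-function. -/
def IsWeakACOn [MeasurableSpace E] (η : ℝ → E) (a b : ℝ) : Prop :=
  ∃ γ : ℝ → E, IsL1On γ a b ∧ ∀ l : E →L[ℝ] ℝ, ∀ t ∈ Set.Icc a b,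
    l (η t) = l (η a) + ∫ s in a..t, l (γ s)

/-- Absolute continuity on an arbitrary interval. -/
def IsACOn [MeasurableSpace E] (η : ℝ → E) (I : Set ℝ) : Prop :=
  Continuous (I.restrict η) ∧ ∀ a b : ℝ, a < b → Set.Icc a b ⊆ I → IsWeakACOn η a b

/-- A nondegenerate interval of `ℝ`. -/
def IsNondegenerateInterval (I : Set ℝ) : Prop :=
  I.OrdConnected ∧ ∃ x ∈ I, ∃ y ∈ I, x ≠ y

/-- Carathéodory solution on the interval `I` of `y' = f (t, y)` with graph in `W`. -/
def IsCaratheodorySol [MeasurableSpace E] (f : ℝ × E → E) (W : Set (ℝ × E))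
    (I : Set ℝ) (γ : ℝ → E) : Prop :=
  IsNondegenerateInterval I ∧ IsACOn γ I ∧ (∀ t ∈ I, (t, γ t) ∈ W) ∧
  ∀ᵐ t ∂volume, t ∈ I → HasTVSDerivWithinAt γ (f (t, γ t)) I t

/-- Local uniqueness of Carathéodory solutions: two solutions agreeing at a point
`t₀` of the intersection of their domains agree on an interval which is a
relatively open neighbourhood of `t₀` in that intersection. -/
def LocalUniquenessCar [MeasurableSpace E] (f : ℝ × E → E) (W : Set (ℝ × E)) : Prop :=
  ∀ I₁ I₂ : Set ℝ, ∀ γ₁ γ₂ : ℝ → E, IsCaratheodorySol f W I₁ γ₁ →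
    IsCaratheodorySol f W I₂ γ₂ → ∀ t₀ ∈ I₁ ∩ I₂, γ₁ t₀ = γ₂ t₀ →
    ∃ K : Set ℝ, K.OrdConnected ∧ t₀ ∈ K ∧
      (∃ U : Set ℝ, IsOpen U ∧ K = U ∩ (I₁ ∩ I₂)) ∧ Set.EqOn γ₁ γ₂ K

end Defs


/-- Local existence of Carathéodory solutions with respect to the interval `J`:
each initial condition in `W` admits a Carathéodory solution on a relatively
open subinterval of `J`. -/
def LocalExistenceCar [MeasurableSpace E] (f : ℝ × E → E) (W : Set (ℝ × E))
    (J : Set ℝ) : Prop :=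
  ∀ p ∈ W, ∃ (I : Set ℝ) (γ : ℝ → E),
    (∃ U : Set ℝ, IsOpen U ∧ I = U ∩ J) ∧ IsCaratheodorySol f W I γ ∧
    p.1 ∈ I ∧ γ p.1 = p.2

end Defs

/-! The solutions of the initial value problem through `(t₀, y₀)` pairwise agree on the
intersection of their domains: the set where two of them agree is relatively open by local
uniqueness and relatively closed by continuity. Two solutions agreeing at a common point glue to
a solution on the union of their (interval) domains, since continuity and the derivative are
local properties and absolute continuity survives concatenation. Hence the union of all these
solutions is again a solution, necessarily the maximal one. Its domain is relatively open in `J`: a local solution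
at any of its points glues to it, so the domain already contains that local solution's
relatively open domain. -/

open Topology Filter Set

theorem exists_isOpen_inter_eq_of_forall_mem_nhdsWithin {X : Type*} [TopologicalSpace X]
    {s t : Set X} (hst : s ⊆ t) (h : ∀ x ∈ s, s ∈ 𝓝[t] x) : ∃ u, IsOpen u ∧ s = u ∩ t := by
  refine ⟨interior {x | x ∈ t → x ∈ s}, isOpen_interior,
    Subset.antisymm (fun x hx => ⟨?_, hst hx⟩) fun x hx => interior_subset hx.1 hx.2⟩
  exact mem_interior_iff_mem_nhds.2 (mem_nhdsWithin_iff_eventually.1 (h x hx))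

section Order

variable {α : Type*} [LinearOrder α] [TopologicalSpace α] [OrderClosedTopology α]

theorem exists_le_Ici_mem_nhdsWithin {D : Set α} {t : α} (ht : t ∈ D) :
    ∃ a ∈ D, a ≤ t ∧ Ici a ∈ 𝓝[D] t := by
  by_cases h : ∃ a ∈ D, a < t
  · obtain ⟨a, ha, hat⟩ := h
    exact ⟨a, ha, hat.le,
      mem_nhdsWithin_of_mem_nhds (mem_of_superset (Ioi_mem_nhds hat) Ioi_subset_Ici_self)⟩
  · push Not at h
    exact ⟨t, ht, le_rfl, mem_of_superset self_mem_nhdsWithin h⟩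

theorem exists_Icc_mem_nhdsWithin {D : Set α} {t : α} (ht : t ∈ D) :
    ∃ a ∈ D, ∃ b ∈ D, t ∈ Icc a b ∧ Icc a b ∈ 𝓝[D] t := by
  obtain ⟨a, ha, hat, hIci⟩ := exists_le_Ici_mem_nhdsWithin ht
  obtain ⟨b, hb, htb, hIic⟩ := exists_le_Ici_mem_nhdsWithin (α := αᵒᵈ) ht
  exact ⟨a, ha, b, hb, ⟨hat, htb⟩, inter_mem hIci hIic⟩

theorem Set.OrdConnected.mem_nhdsWithin_union_of_notMem {I₁ I₂ : Set α} (h₁ : I₁.OrdConnected)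
    (h₂ : I₂.OrdConnected) {c t : α} (hc₁ : c ∈ I₁) (hc₂ : c ∈ I₂) (ht₁ : t ∈ I₁)
    (ht₂ : t ∉ I₂) : I₁ ∈ 𝓝[I₁ ∪ I₂] t := by
  rw [nhdsWithin_union]
  refine ⟨self_mem_nhdsWithin, ?_⟩
  rcases (ne_of_mem_of_not_mem hc₂ ht₂).lt_or_gt with hct | htc
  · refine mem_nhdsWithin.2 ⟨Ioi c, isOpen_Ioi, hct, fun s ⟨hcs, hs⟩ => ?_⟩
    refine h₁.out hc₁ ht₁ ⟨hcs.le, ?_⟩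
    by_contra! hts
    exact ht₂ (h₂.out hc₂ hs ⟨hct.le, hts.le⟩)
  · refine mem_nhdsWithin.2 ⟨Iio c, isOpen_Iio, htc, fun s ⟨hsc, hs⟩ => ?_⟩
    refine h₁.out ht₁ hc₁ ⟨?_, hsc.le⟩
    by_contra! hst
    exact ht₂ (h₂.out hs hc₂ ⟨hst.le, htc.le⟩)

end Order

section Derivative

variable {E : Type*} [TopologicalSpace E] [AddCommGroup E] [Module ℝ E]
  {η δ : ℝ → E} {v : E} {S T : Set ℝ} {t : ℝ}

theorem HasTVSDerivWithinAt.mono_of_mem_nhdsWithin (h : HasTVSDerivWithinAt η v T t)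
    (hT : T ∈ 𝓝[S] t) : HasTVSDerivWithinAt η v S t :=
  Tendsto.mono_left h (nhdsWithin_le_of_mem (sdiff_mem_nhdsWithin_sdiff hT {t}))

theorem HasTVSDerivWithinAt.congr_of_eqOn (h : HasTVSDerivWithinAt η v S t)
    (heq : EqOn δ η S) (ht : t ∈ S) : HasTVSDerivWithinAt δ v S t := by
  refine Tendsto.congr' ?_ h
  filter_upwards [self_mem_nhdsWithin] with s hs
  rw [heq hs.1, heq ht]

theorem hasTVSDerivWithinAt_union :
    HasTVSDerivWithinAt η v (S ∪ T) t ↔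
      HasTVSDerivWithinAt η v S t ∧ HasTVSDerivWithinAt η v T t := by
  simp only [HasTVSDerivWithinAt, union_sdiff_distrib, nhdsWithin_union, tendsto_sup]

end Derivative

section AbsoluteContinuity

variable {E : Type*} [TopologicalSpace E] [AddCommGroup E] [Module ℝ E] [MeasurableSpace E]

theorem IsL1On.integrableOn_comp [OpensMeasurableSpace E] {g : ℝ → E} {a b : ℝ}
    (hg : IsL1On g a b) (l : E →L[ℝ] ℝ) :
    IntegrableOn (fun s => l (g s)) (Icc a b) := by
  have hmeas : AEStronglyMeasurable (fun s => l (g s)) (volume.restrict (Icc a b)) :=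
    (l.continuous.measurable.comp_aemeasurable
      ((aemeasurable_restrict_iff_comap_subtype measurableSet_Icc).2
        hg.1.aemeasurable)).aestronglyMeasurable
  have hq : Continuous ((normSeminorm ℝ ℝ).comp l.toLinearMap) := continuous_norm.comp l.continuous
  exact (integrable_norm_iff hmeas).1 (hg.2.2 _ hq)

theorem IsL1On.piecewise {g₁ g₂ : ℝ → E} {a b c : ℝ} (hac : a ≤ c) (hcb : c ≤ b)
    (hg₁ : IsL1On g₁ a c) (hg₂ : IsL1On g₂ c b) :
    IsL1On (fun s => if s ≤ c then g₁ s else g₂ s) a b := by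
  refine ⟨?_, ?_, fun q hq => ?_⟩
  · have hclamp : (fun x : Icc a b => if (x : ℝ) ≤ c then g₁ x else g₂ x) =
        fun x : Icc a b => if (x : ℝ) ≤ c then (Icc a c).domRestrict g₁ (projIcc a c hac x)
          else (Icc c b).domRestrict g₂ (projIcc c b hcb x) := by
      funext x
      by_cases h : (x : ℝ) ≤ c
      · simp [h, projIcc_of_mem hac ⟨x.2.1, h⟩]
      · simp [h, projIcc_of_mem hcb ⟨(not_le.1 h).le, x.2.2⟩]
    change Measurable fun x : Icc a b => if (x : ℝ) ≤ c then g₁ x else g₂ x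
    rw [hclamp]
    exact Measurable.ite (measurableSet_le measurable_subtype_coe measurable_const)
      (hg₁.1.comp (continuous_projIcc.comp continuous_subtype_val).measurable)
      (hg₂.1.comp (continuous_projIcc.comp continuous_subtype_val).measurable)
  · refine (hg₁.2.1.union hg₂.2.1).mono ?_
    rintro _ ⟨s, hs, rfl⟩
    by_cases h : s ≤ c
    · exact Or.inl ⟨s, ⟨hs.1, h⟩, (if_pos h).symm⟩
    · exact Or.inr ⟨s, ⟨(not_le.1 h).le, hs.2⟩, (if_neg h).symm⟩
  · rw [← Icc_union_Ioc_eq_Icc hac hcb]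
    refine ((hg₁.2.2 q hq).congr_fun (fun s hs => ?_) measurableSet_Icc).union
      (((hg₂.2.2 q hq).mono_set Ioc_subset_Icc_self).congr_fun (fun s hs => ?_) measurableSet_Ioc)
    · simp [hs.2]
    · simp [not_le.2 hs.1]

theorem IsWeakACOn.congr {η δ : ℝ → E} {a b : ℝ} (h : IsWeakACOn η a b) (hab : a ≤ b)
    (heq : EqOn δ η (Icc a b)) : IsWeakACOn δ a b := by
  obtain ⟨g, hg, hη⟩ := h
  exact ⟨g, hg, fun l t ht => by rw [heq ht, heq (left_mem_Icc.2 hab)]; exact hη l t ht⟩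

theorem IsWeakACOn.trans [OpensMeasurableSpace E] {η : ℝ → E} {a b c : ℝ} (hac : a ≤ c)
    (hcb : c ≤ b) (h₁ : IsWeakACOn η a c) (h₂ : IsWeakACOn η c b) : IsWeakACOn η a b := by
  obtain ⟨g₁, hg₁, hη₁⟩ := h₁
  obtain ⟨g₂, hg₂, hη₂⟩ := h₂
  refine ⟨_, hg₁.piecewise hac hcb hg₂, fun l t ht => ?_⟩
  have hleft : ∀ u ∈ Icc a c,
      ∫ s in a..u, l (g₁ s) = ∫ s in a..u, l (if s ≤ c then g₁ s else g₂ s) :=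
    fun u hu => intervalIntegral.integral_congr fun s hs => by
      rw [uIcc_of_le hu.1] at hs
      simp [hs.2.trans hu.2]
  rcases le_total t c with htc | hct
  · rw [hη₁ l t ⟨ht.1, htc⟩, hleft t ⟨ht.1, htc⟩]
  have hright : ∫ s in c..t, l (g₂ s) = ∫ s in c..t, l (if s ≤ c then g₁ s else g₂ s) :=
    intervalIntegral.integral_congr_ae (ae_of_all _ fun s hs => by
      rw [uIoc_of_le hct] at hs
      simp [not_le.2 hs.1])
  have hint := (hg₁.piecewise hac hcb hg₂).integrableOn_comp l
  have hac' : c ∈ Icc a b := ⟨hac, hcb⟩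
  rw [hη₂ l t ⟨hct, ht.2⟩, hη₁ l c ⟨hac, le_rfl⟩, hleft c ⟨hac, le_rfl⟩, hright, add_assoc,
    intervalIntegral.integral_add_adjacent_intervals
      ((hint.mono_set (uIcc_subset_Icc (left_mem_Icc.2 (hac.trans hcb)) hac')).intervalIntegrable)
      ((hint.mono_set (uIcc_subset_Icc hac' ht)).intervalIntegrable)]

theorem IsACOn.continuousOn {η : ℝ → E} {I : Set ℝ} (h : IsACOn η I) : ContinuousOn η I :=
  continuousOn_iff_continuous_domRestrict.2 h.1

theorem IsACOn.congr {η δ : ℝ → E} {I : Set ℝ} (h : IsACOn η I) (heq : EqOn δ η I) :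
    IsACOn δ I :=
  ⟨continuousOn_iff_continuous_domRestrict.1 (h.continuousOn.congr heq),
    fun a b hab hsub => (h.2 a b hab hsub).congr hab.le (heq.mono hsub)⟩

theorem IsACOn.union [OpensMeasurableSpace E] {δ : ℝ → E} {I₁ I₂ : Set ℝ} (ho₁ : I₁.OrdConnected)
    (ho₂ : I₂.OrdConnected) {c : ℝ} (hc₁ : c ∈ I₁) (hc₂ : c ∈ I₂) (h₁ : IsACOn δ I₁)
    (h₂ : IsACOn δ I₂) : IsACOn δ (I₁ ∪ I₂) := by
  refine ⟨continuousOn_iff_continuous_domRestrict.1 fun t ht => ?_, fun a b hab hsub => ?_⟩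
  · by_cases ht₁ : t ∈ I₁ <;> by_cases ht₂ : t ∈ I₂
    · exact continuousWithinAt_union.2 ⟨h₁.continuousOn t ht₁, h₂.continuousOn t ht₂⟩
    · exact (h₁.continuousOn t ht₁).mono_of_mem_nhdsWithin
        (ho₁.mem_nhdsWithin_union_of_notMem ho₂ hc₁ hc₂ ht₁ ht₂)
    · rw [union_comm]
      exact (h₂.continuousOn t ht₂).mono_of_mem_nhdsWithin
        (ho₂.mem_nhdsWithin_union_of_notMem ho₁ hc₂ hc₁ ht₂ ht₁)
    · exact absurd ht (by simp [ht₁, ht₂])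
  have hpiece : ∀ x y, x < y → ∀ z ∈ I₁ ∪ I₂, Icc x y ⊆ uIcc z c → IsWeakACOn δ x y := by
    rintro x y hxy z (hz | hz) hxyz
    · exact h₁.2 x y hxy (hxyz.trans (ho₁.uIcc_subset hz hc₁))
    · exact h₂.2 x y hxy (hxyz.trans (ho₂.uIcc_subset hz hc₂))
  have ha := hsub (left_mem_Icc.2 hab.le)
  have hb := hsub (right_mem_Icc.2 hab.le)
  rcases le_or_gt c a with hca | hac
  · exact hpiece a b hab b hb ((Icc_subset_Icc_left hca).trans Icc_subset_uIcc')
  rcases le_or_gt b c with hbc | hcb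
  · exact hpiece a b hab a ha ((Icc_subset_Icc_right hbc).trans Icc_subset_uIcc)
  exact (hpiece a c hac a ha Icc_subset_uIcc).trans hac.le hcb.le
    (hpiece c b hcb b hb Icc_subset_uIcc')

end AbsoluteContinuity

section Solutions

variable {E : Type*} [TopologicalSpace E] [AddCommGroup E] [Module ℝ E] [MeasurableSpace E]
  {f : ℝ × E → E} {W : Set (ℝ × E)}

theorem IsCaratheodorySol.eqOn_inter [T2Space E] (huniq : LocalUniquenessCar f W)
    {I₁ I₂ : Set ℝ} {γ₁ γ₂ : ℝ → E} (h₁ : IsCaratheodorySol f W I₁ γ₁)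
    (h₂ : IsCaratheodorySol f W I₂ γ₂) {c : ℝ} (hc : c ∈ I₁ ∩ I₂) (hγc : γ₁ c = γ₂ c) :
    EqOn γ₁ γ₂ (I₁ ∩ I₂) := by
  have hconn : IsPreconnected (I₁ ∩ I₂) := (h₁.1.1.inter h₂.1.1).isPreconnected
  refine fun t ht => (hconn.induction₂ (fun x y => γ₁ x = γ₂ x ↔ γ₁ y = γ₂ y) (fun x hx => ?_)
    (fun _ _ _ _ _ _ => Iff.trans) (fun _ _ _ _ => Iff.symm) hc ht).1 hγc
  by_cases hx' : γ₁ x = γ₂ x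
  · obtain ⟨K, -, hxK, ⟨U, hU, rfl⟩, hK⟩ := huniq I₁ I₂ γ₁ γ₂ h₁ h₂ x hx hx'
    filter_upwards [mem_nhdsWithin.2 ⟨U, hU, hxK.1, subset_rfl⟩] with y hy
    exact iff_of_true hx' (hK hy)
  · have hc₁ := h₁.2.1.continuousOn.mono inter_subset_left x hx
    have hc₂ := h₂.2.1.continuousOn.mono inter_subset_right x hx
    filter_upwards [(hc₁.prodMk_nhds hc₂).eventually (isClosed_diagonal.isOpen_compl.mem_nhds hx')]
      with y hy
    exact iff_of_false hx' hy

theorem IsCaratheodorySol.exists_union [T2Space E] [OpensMeasurableSpace E]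
    (huniq : LocalUniquenessCar f W) {I₁ I₂ : Set ℝ} {γ₁ γ₂ : ℝ → E}
    (h₁ : IsCaratheodorySol f W I₁ γ₁) (h₂ : IsCaratheodorySol f W I₂ γ₂) {c : ℝ} (hc₁ : c ∈ I₁)
    (hc₂ : c ∈ I₂) (hγc : γ₁ c = γ₂ c) :
    ∃ δ : ℝ → E, IsCaratheodorySol f W (I₁ ∪ I₂) δ ∧ EqOn δ γ₁ I₁ ∧ EqOn δ γ₂ I₂ := by
  classical
  have he₁ : EqOn (I₁.piecewise γ₁ γ₂) γ₁ I₁ := piecewise_eqOn _ _ _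
  have he₂ : EqOn (I₁.piecewise γ₁ γ₂) γ₂ I₂ := fun t ht => by
    by_cases ht₁ : t ∈ I₁
    · rw [piecewise_eq_of_mem _ _ _ ht₁]
      exact h₁.eqOn_inter huniq h₂ ⟨hc₁, hc₂⟩ hγc ⟨ht₁, ht⟩
    · exact piecewise_eq_of_notMem _ _ _ ht₁
  set δ := I₁.piecewise γ₁ γ₂
  have hd₁ : ∀ᵐ t, t ∈ I₁ → HasTVSDerivWithinAt δ (f (t, δ t)) I₁ t := by
    filter_upwards [h₁.2.2.2] with t hd ht
    rw [he₁ ht]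
    exact (hd ht).congr_of_eqOn he₁ ht
  have hd₂ : ∀ᵐ t, t ∈ I₂ → HasTVSDerivWithinAt δ (f (t, δ t)) I₂ t := by
    filter_upwards [h₂.2.2.2] with t hd ht
    rw [he₂ ht]
    exact (hd ht).congr_of_eqOn he₂ ht
  have ho : (I₁ ∪ I₂).OrdConnected :=
    (h₁.1.1.isPreconnected.union c hc₁ hc₂ h₂.1.1.isPreconnected).ordConnected
  obtain ⟨x, hx, y, hy, hxy⟩ := h₁.1.2
  refine ⟨δ, ⟨⟨ho, x, .inl hx, y, .inl hy, hxy⟩,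
    (h₁.2.1.congr he₁).union h₁.1.1 h₂.1.1 hc₁ hc₂ (h₂.2.1.congr he₂), ?_, ?_⟩, he₁, he₂⟩
  · rintro t (ht | ht)
    · exact he₁ ht ▸ h₁.2.2.1 t ht
    · exact he₂ ht ▸ h₂.2.2.1 t ht
  filter_upwards [hd₁, hd₂] with t hd₁ hd₂ ht
  by_cases ht₁ : t ∈ I₁ <;> by_cases ht₂ : t ∈ I₂
  · exact hasTVSDerivWithinAt_union.2 ⟨hd₁ ht₁, hd₂ ht₂⟩
  · exact (hd₁ ht₁).mono_of_mem_nhdsWithin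
      (h₁.1.1.mem_nhdsWithin_union_of_notMem h₂.1.1 hc₁ hc₂ ht₁ ht₂)
  · rw [union_comm]
    exact (hd₂ ht₂).mono_of_mem_nhdsWithin
      (h₂.1.1.mem_nhdsWithin_union_of_notMem h₁.1.1 hc₂ hc₁ ht₂ ht₁)
  · exact absurd ht (by simp [ht₁, ht₂])

theorem IsCaratheodorySol.of_local {I : Set ℝ} {γ : ℝ → E} (hI : IsNondegenerateInterval I)
    (hloc : ∀ t ∈ I, ∃ K η, IsCaratheodorySol f W K η ∧ t ∈ K ∧ K ∈ 𝓝[I] t ∧ EqOn γ η K)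
    (hAC : ∀ a b, a < b → Icc a b ⊆ I → IsWeakACOn γ a b) : IsCaratheodorySol f W I γ := by
  choose! K η hsol hmem hnhds heq using hloc
  refine ⟨hI, ⟨continuousOn_iff_continuous_domRestrict.1 fun t ht => ?_, hAC⟩,
    fun t ht => heq t ht (hmem t ht) ▸ (hsol t ht).2.2.1 t (hmem t ht), ?_⟩
  · exact (((hsol t ht).2.1.continuousOn t (hmem t ht)).congr_of_mem (heq t ht)
      (hmem t ht)).mono_of_mem_nhdsWithin (hnhds t ht)
  -- Lindelöf: countably many `K t` cover `I`, each a neighbourhood in `I` of its points near `t`.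
  obtain ⟨T, hTI, hT, hcover⟩ := TopologicalSpace.countable_cover_nhdsWithin
    (f := fun t => {s | K t ∈ 𝓝[I] s}) fun t ht => eventually_eventually_nhdsWithin.2 (hnhds t ht)
  have hderiv : ∀ᵐ s, ∀ t ∈ T, s ∈ K t → HasTVSDerivWithinAt (η t) (f (s, η t s)) (K t) s :=
    (ae_ball_iff hT).2 fun t ht => (hsol t (hTI ht)).2.2.2
  filter_upwards [hderiv] with s hs hsI
  obtain ⟨t, htT, hst⟩ := mem_iUnion₂.1 (hcover hsI)
  have hsK : s ∈ K t := mem_of_mem_nhdsWithin hsI hst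
  rw [heq t (hTI htT) hsK]
  exact ((hs t htT hsK).congr_of_eqOn (heq t (hTI htT)) hsK).mono_of_mem_nhdsWithin hst

end Solutions

namespace CaratheodoryIVP

variable {E : Type*} [TopologicalSpace E] [AddCommGroup E] [Module ℝ E] [MeasurableSpace E]

def solutions (f : ℝ × E → E) (W : Set (ℝ × E)) (t₀ : ℝ) (y₀ : E) : Set (Set ℝ × (ℝ → E)) :=
  {p | IsCaratheodorySol f W p.1 p.2 ∧ t₀ ∈ p.1 ∧ p.2 t₀ = y₀}

def maxDomain (f : ℝ × E → E) (W : Set (ℝ × E)) (t₀ : ℝ) (y₀ : E) : Set ℝ :=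
  ⋃ p ∈ solutions f W t₀ y₀, p.1

open Classical in
noncomputable def maxSol (f : ℝ × E → E) (W : Set (ℝ × E)) (t₀ : ℝ) (y₀ : E) (t : ℝ) : E :=
  if h : ∃ p ∈ solutions f W t₀ y₀, t ∈ p.1 then h.choose.2 t else y₀

variable {f : ℝ × E → E} {W : Set (ℝ × E)} {t₀ : ℝ} {y₀ : E} {p : Set ℝ × (ℝ → E)}

theorem subset_maxDomain (hp : p ∈ solutions f W t₀ y₀) : p.1 ⊆ maxDomain f W t₀ y₀ :=
  subset_biUnion_of_mem (u := Prod.fst) hp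

variable [T2Space E]

theorem maxSol_eqOn (huniq : LocalUniquenessCar f W) (hp : p ∈ solutions f W t₀ y₀) :
    EqOn (maxSol f W t₀ y₀) p.2 p.1 := by
  intro t ht
  have h : ∃ q ∈ solutions f W t₀ y₀, t ∈ q.1 := ⟨p, hp, ht⟩
  obtain ⟨hq, htq⟩ := h.choose_spec
  rw [maxSol, dif_pos h]
  exact hq.1.eqOn_inter huniq hp.1 ⟨hq.2.1, hp.2.1⟩ (hq.2.2.trans hp.2.2.symm) ⟨htq, ht⟩

variable [OpensMeasurableSpace E]

theorem exists_union_mem_solutions (huniq : LocalUniquenessCar f W)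
    (hp : p ∈ solutions f W t₀ y₀) {K : Set ℝ} {η : ℝ → E} (hη : IsCaratheodorySol f W K η)
    {c : ℝ} (hcp : c ∈ p.1) (hcK : c ∈ K) (hc : p.2 c = η c) :
    ∃ δ, (p.1 ∪ K, δ) ∈ solutions f W t₀ y₀ := by
  obtain ⟨δ, hδ, hδp, -⟩ := hp.1.exists_union huniq hη hcp hcK hc
  exact ⟨δ, hδ, .inl hp.2.1, (hδp hp.2.1).trans hp.2.2⟩

theorem exists_Icc_subset (huniq : LocalUniquenessCar f W) {a b : ℝ}
    (ha : a ∈ maxDomain f W t₀ y₀) (hb : b ∈ maxDomain f W t₀ y₀) :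
    ∃ p ∈ solutions f W t₀ y₀, Icc a b ⊆ p.1 := by
  obtain ⟨p, hp, hap⟩ := mem_iUnion₂.1 ha
  obtain ⟨q, hq, hbq⟩ := mem_iUnion₂.1 hb
  obtain ⟨δ, hδ⟩ :=
    exists_union_mem_solutions huniq hp hq.1 hp.2.1 hq.2.1 (hp.2.2.trans hq.2.2.symm)
  exact ⟨_, hδ, hδ.1.1.1.out (.inl hap) (.inr hbq)⟩

theorem mem_solutions_maxSol (huniq : LocalUniquenessCar f W) (hp : p ∈ solutions f W t₀ y₀) :
    (maxDomain f W t₀ y₀, maxSol f W t₀ y₀) ∈ solutions f W t₀ y₀ := by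
  have hsub := subset_maxDomain hp
  have hD : IsNondegenerateInterval (maxDomain f W t₀ y₀) := by
    obtain ⟨x, hx, y, hy, hxy⟩ := hp.1.1.2
    refine ⟨⟨fun a ha b hb => ?_⟩, x, hsub hx, y, hsub hy, hxy⟩
    obtain ⟨q, hq, hab⟩ := exists_Icc_subset huniq ha hb
    exact hab.trans (subset_maxDomain hq)
  refine ⟨.of_local hD (fun t ht => ?_) fun a b hab hab' => ?_, hsub hp.2.1,
    (maxSol_eqOn huniq hp hp.2.1).trans hp.2.2⟩
  · obtain ⟨a, ha, b, hb, htab, hnhds⟩ := exists_Icc_mem_nhdsWithin ht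
    obtain ⟨q, hq, hab⟩ := exists_Icc_subset huniq ha hb
    exact ⟨q.1, q.2, hq.1, hab htab, mem_of_superset hnhds hab, maxSol_eqOn huniq hq⟩
  · obtain ⟨q, hq, hsub'⟩ := exists_Icc_subset huniq (hab' (left_mem_Icc.2 hab.le))
      (hab' (right_mem_Icc.2 hab.le))
    exact (hq.1.2.1.2 a b hab hsub').congr hab.le ((maxSol_eqOn huniq hq).mono hsub')

theorem maxDomain_mem_nhdsWithin {J : Set ℝ} (hex : LocalExistenceCar f W J)
    (huniq : LocalUniquenessCar f W)
    (hmax : (maxDomain f W t₀ y₀, maxSol f W t₀ y₀) ∈ solutions f W t₀ y₀) {t : ℝ}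
    (ht : t ∈ maxDomain f W t₀ y₀) : maxDomain f W t₀ y₀ ∈ 𝓝[J] t := by
  obtain ⟨K, η, ⟨U, hU, rfl⟩, hη, htK, hηt⟩ := hex (t, maxSol f W t₀ y₀ t) (hmax.1.2.2.1 t ht)
  obtain ⟨δ, hδ⟩ := exists_union_mem_solutions huniq hmax hη ht htK hηt.symm
  exact mem_nhdsWithin.2 ⟨U, hU, htK.1, subset_union_right.trans (subset_maxDomain hδ)⟩

end CaratheodoryIVP

theorem exists_maximal_caratheodory_solution_general
    {E : Type*} [AddCommGroup E] [UniformSpace E]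
    [Module ℝ E] [TopologicalSpace.MetrizableSpace E]
    [MeasurableSpace E] [BorelSpace E]
    (J : Set ℝ)
    (f : ℝ × E → E) (W : Set (ℝ × E)) (hW : ∀ p ∈ W, p.1 ∈ J)
    (hex : LocalExistenceCar f W J) (huniq : LocalUniquenessCar f W)
    (t₀ : ℝ) (y₀ : E) (hty : (t₀, y₀) ∈ W) :
    ∃ (I : Set ℝ) (γ : ℝ → E),
      (∃ U : Set ℝ, IsOpen U ∧ I = U ∩ J) ∧
      IsCaratheodorySol f W I γ ∧ t₀ ∈ I ∧ γ t₀ = y₀ ∧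
      ∀ (I' : Set ℝ) (η : ℝ → E), IsCaratheodorySol f W I' η → t₀ ∈ I' →
        η t₀ = y₀ → I' ⊆ I ∧ Set.EqOn η γ I' := by
  obtain ⟨I₀, γ₀, -, h₀, ht₀, hy₀⟩ := hex (t₀, y₀) hty
  have hmax := CaratheodoryIVP.mem_solutions_maxSol huniq (p := (I₀, γ₀)) ⟨h₀, ht₀, hy₀⟩
  refine ⟨_, _, ?_, hmax.1, hmax.2.1, hmax.2.2, fun I' η hη ht' hy' => ?_⟩
  · exact exists_isOpen_inter_eq_of_forall_mem_nhdsWithin (fun t ht => hW _ (hmax.1.2.2.1 t ht))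
      fun t ht => CaratheodoryIVP.maxDomain_mem_nhdsWithin hex huniq hmax ht
  · have hp : (I', η) ∈ CaratheodoryIVP.solutions f W t₀ y₀ := ⟨hη, ht', hy'⟩
    exact ⟨CaratheodoryIVP.subset_maxDomain hp, (CaratheodoryIVP.maxSol_eqOn huniq hp).symm⟩

/-- Existence of maximal Carathéodory solutions, given local existence and local
uniqueness; the domain of the maximal solution is relatively open in `J`. -/
theorem exists_maximal_caratheodory_solution
    {E : Type*} [AddCommGroup E] [UniformSpace E] [IsUniformAddGroup E]
    [Module ℝ E] [ContinuousSMul ℝ E] [LocallyConvexSpace ℝ E]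
    [CompleteSpace E] [TopologicalSpace.MetrizableSpace E]
    [MeasurableSpace E] [BorelSpace E]
    (J : Set ℝ) (hJ : IsNondegenerateInterval J)
    (f : ℝ × E → E) (W : Set (ℝ × E)) (hW : ∀ p ∈ W, p.1 ∈ J)
    (hex : LocalExistenceCar f W J) (huniq : LocalUniquenessCar f W)
    (t₀ : ℝ) (y₀ : E) (hty : (t₀, y₀) ∈ W) :
    ∃ (I : Set ℝ) (γ : ℝ → E),
      (∃ U : Set ℝ, IsOpen U ∧ I = U ∩ J) ∧
      IsCaratheodorySol f W I γ ∧ t₀ ∈ I ∧ γ t₀ = y₀ ∧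
      ∀ (I' : Set ℝ) (η : ℝ → E), IsCaratheodorySol f W I' η → t₀ ∈ I' →
        η t₀ = y₀ → I' ⊆ I ∧ Set.EqOn η γ I' :=
  exists_maximal_caratheodory_solution_general J f W hW hex huniq t₀ y₀ hty
end

section
/- Let E be a locally convex space, (Z, ‖·‖) a Banach space, U ⊆ E open, K ⊆ U compact, and f : U → Z a C¹-map. Then there exist a continuous seminorm P on E with K + B^P_1(0) ⊆ U and a constant such that, for each continuous seminorm p ≥ P on E, f satisfies the Lipschitz estimate ‖f(z) − f(y)‖ ≤ p(z − y) for all y, z in the open set V_p := K + B^p_1(0). -/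
/-!
The hypothesis on `df` says that `df (x, v)` is the line derivative of `f` at `x` in direction `v`;
in particular `df (x, ·)` is positively homogeneous and vanishes at `0`. The open set of `(x, v)`
with `x ∈ U`, `‖f x‖ < M` and `‖df (x, v)‖ < 1` contains `K × {0}`, so by the tube lemma and local
convexity it contains all `(x, v)` with `q (x - k) < 1` for some `k ∈ K` and `q v < 1`, for one
continuous seminorm `q`; homogeneity turns the last bound into `‖df (x, v)‖ ≤ q v`. For
`p ≥ (2M + 1) q` and `y, z` near `K`, either `p (z - y) ≥ 2M` and the bound on `f` suffices, or the
whole segment `[y, z]` stays in the `q`-neighbourhood of `K` and the mean value theorem gives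
`‖f z - f y‖ ≤ q (z - y) ≤ p (z - y)`.
-/

open Set Filter Topology
open scoped NNReal

section LineDeriv

variable {E : Type*} [AddCommGroup E] [Module ℝ E] {Z : Type*} [NormedAddCommGroup Z]
  [NormedSpace ℝ Z] {f : E → Z}

theorem norm_sub_le_of_hasLineDerivAt_segment {y v : E} {f' : ℝ → Z} {C : ℝ}
    (hf : ∀ s ∈ Icc (0 : ℝ) 1, HasLineDerivAt ℝ f (f' s) (y + s • v) v)
    (bound : ∀ s ∈ Ico (0 : ℝ) 1, ‖f' s‖ ≤ C) : ‖f (y + v) - f y‖ ≤ C := by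
  have hderiv : ∀ s ∈ Icc (0 : ℝ) 1, HasDerivAt (fun t : ℝ ↦ f (y + t • v)) (f' s) s := by
    intro s hs
    have h := HasDerivAt.comp_sub_const s s (by rw [sub_self]; exact hf s hs)
    convert h using 3 with t
    rw [sub_smul, add_add_sub_cancel]
  simpa using norm_image_sub_le_of_norm_deriv_le_segment_01'
    (fun s hs ↦ (hderiv s hs).hasDerivWithinAt) bound

theorem norm_le_seminorm_of_forall_lt_one {g : E → Z} {q : Seminorm ℝ E}
    (hg : ∀ c : ℝ, 0 < c → ∀ v, g (c • v) = c • g v) (h : ∀ v, q v < 1 → ‖g v‖ ≤ 1) (v : E) :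
    ‖g v‖ ≤ q v := by
  refine le_of_forall_pos_le_add fun ε hε ↦ ?_
  have hc : 0 < q v + ε := by positivity
  have hlt : q ((q v + ε)⁻¹ • v) < 1 := by
    rw [map_smul_eq_mul, Real.norm_of_nonneg (inv_nonneg.mpr hc.le), inv_mul_lt_one₀ hc]
    linarith
  calc ‖g v‖ = ‖g ((q v + ε) • (q v + ε)⁻¹ • v)‖ := by rw [smul_inv_smul₀ hc.ne']
    _ = (q v + ε) * ‖g ((q v + ε)⁻¹ • v)‖ := by
      rw [hg _ hc, norm_smul, Real.norm_of_nonneg hc.le]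
    _ ≤ q v + ε := mul_le_of_le_one_right hc.le (h _ hlt)

theorem Seminorm.apply_le_smul_apply_of_one_le (q : Seminorm ℝ E) {r : ℝ≥0} (hr : 1 ≤ r)
    (w : E) : q w ≤ (r • q) w := by
  simpa [NNReal.smul_def] using le_mul_of_one_le_left (apply_nonneg q w) (NNReal.one_le_coe.mpr hr)

theorem norm_sub_le_seminorm_of_near_compact {U K : Set E} {df : E × E → Z}
    {q p : Seminorm ℝ E} {M : ℝ≥0}
    (hline : ∀ x ∈ U, ∀ v, HasLineDerivAt ℝ f (df (x, v)) x v)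
    (hq : ∀ k ∈ K, ∀ x, q (x - k) < 1 → x ∈ U ∧ ‖f x‖ < M ∧ ∀ v, ‖df (x, v)‖ ≤ q v)
    (hp : ∀ w, ((2 * M + 1) • q) w ≤ p w) {y z k k' : E} (hk : k ∈ K) (hk' : k' ∈ K)
    (hy : p (y - k) < 1) (hz : p (z - k') < 1) : ‖f z - f y‖ ≤ p (z - y) := by
  have hqp : ∀ w, (2 * M + 1) * q w ≤ p w := by simpa [NNReal.smul_def] using hp
  have hle : ∀ w, q w ≤ p w := fun w ↦
    (q.apply_le_smul_apply_of_one_le le_add_self w).trans (hp w)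
  obtain ⟨-, hfy, -⟩ := hq k hk y ((hle _).trans_lt hy)
  obtain ⟨-, hfz, -⟩ := hq k' hk' z ((hle _).trans_lt hz)
  rcases le_or_gt (2 * (M : ℝ)) (p (z - y)) with hfar | hclose
  · calc ‖f z - f y‖ ≤ ‖f z‖ + ‖f y‖ := norm_sub_le _ _
      _ ≤ 2 * M := by linarith
      _ ≤ p (z - y) := hfar
  -- the `q`-distance from `k` along `[y, z]` is at most `(p (y - k) + p (z - y)) / (2M + 1) < 1`
  have hseg : ∀ s ∈ Icc (0 : ℝ) 1, q (y + s • (z - y) - k) < 1 := by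
    intro s hs
    have hsum : (2 * M + 1) * (q (y - k) + q (z - y)) < (2 * M + 1) * 1 := by
      linarith [hqp (y - k), hqp (z - y)]
    calc q (y + s • (z - y) - k) = q ((y - k) + s • (z - y)) := by rw [add_sub_right_comm]
      _ ≤ q (y - k) + s * q (z - y) := by
        grw [map_add_le_add, map_smul_eq_mul, Real.norm_of_nonneg hs.1]
      _ ≤ q (y - k) + q (z - y) := by
        gcongr; exact mul_le_of_le_one_left (apply_nonneg q _) hs.2
      _ < 1 := lt_of_mul_lt_mul_left hsum (by positivity)
  have hmvt := norm_sub_le_of_hasLineDerivAt_segment (C := p (z - y))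
    (fun s hs ↦ hline _ (hq k hk _ (hseg s hs)).1 (z - y))
    (fun s hs ↦ ((hq k hk _ (hseg s (Ico_subset_Icc_self hs))).2.2 _).trans (hle _))
  rwa [add_sub_cancel] at hmvt

end LineDeriv

theorem isOpen_setOf_norm_lt_of_continuousOn {E : Type*} [TopologicalSpace E]
    {Z : Type*} [NormedAddCommGroup Z] {U : Set E} (hU : IsOpen U) {f : E → Z}
    (hf : ContinuousOn f U) {df : E × E → Z} (hdf : ContinuousOn df (U ×ˢ univ)) (M : ℝ) :
    IsOpen {w : E × E | w.1 ∈ U ∧ ‖f w.1‖ < M ∧ ‖df w‖ < 1} := by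
  have hcont : ContinuousOn (fun w : E × E ↦ (‖f w.1‖, ‖df w‖)) (U ×ˢ univ) :=
    ((hf.comp continuousOn_fst fun _ hw ↦ hw.1).norm).prodMk hdf.norm
  convert hcont.isOpen_inter_preimage (t := Iio M ×ˢ Iio 1) (hU.prod isOpen_univ)
    (isOpen_Iio.prod isOpen_Iio) using 1
  ext w
  simp

section LocallyConvex

variable {E : Type*} [AddCommGroup E] [Module ℝ E] [TopologicalSpace E]
  [IsTopologicalAddGroup E] [ContinuousSMul ℝ E] [LocallyConvexSpace ℝ E]

theorem exists_continuous_seminorm_ball_subset {N : Set E} (hN : N ∈ 𝓝 (0 : E)) :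
    ∃ q : Seminorm ℝ E, Continuous q ∧ q.ball 0 1 ⊆ N := by
  obtain ⟨s, hs, hsN⟩ := (nhds_hasBasis_absConvex_open ℝ E).mem_iff.mp hN
  let s' : AbsConvexOpenSets ℝ E := ⟨s, hs⟩
  exact ⟨gaugeSeminormFamily ℝ E s', with_gaugeSeminormFamily.continuous_seminorm s',
    (gaugeSeminormFamily_ball s').trans_subset hsN⟩

theorem IsCompact.exists_continuous_seminorm_of_prod_subset {K : Set E} (hK : IsCompact K)
    {S : Set (E × E)} (hS : IsOpen S) (hKS : K ×ˢ {0} ⊆ S) :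
    ∃ q : Seminorm ℝ E, Continuous q ∧
      ∀ k ∈ K, ∀ x v, q (x - k) < 1 → q v < 1 → (x, v) ∈ S := by
  obtain ⟨V, W, hV, hW, hKV, h0W, hVW⟩ := generalized_tube_lemma hK isCompact_singleton hS hKS
  obtain ⟨O, hO, hKO⟩ := compact_open_separated_add_right hK hV hKV
  obtain ⟨q, hq, hqOW⟩ :=
    exists_continuous_seminorm_ball_subset (inter_mem hO (hW.mem_nhds (h0W rfl)))
  refine ⟨q, hq, fun k hk x v hx hv ↦ hVW ⟨hKO ?_, (hqOW ?_).2⟩⟩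
  · rw [← add_sub_cancel k x]
    exact add_mem_add hk (hqOW (q.mem_ball_zero.mpr hx)).1
  · exact q.mem_ball_zero.mpr hv

end LocallyConvex

theorem lipschitz_seminorm_estimate_of_C1_general
    {E : Type*} [AddCommGroup E] [Module ℝ E] [TopologicalSpace E]
    [IsTopologicalAddGroup E] [ContinuousSMul ℝ E] [LocallyConvexSpace ℝ E]
    {Z : Type*} [NormedAddCommGroup Z] [NormedSpace ℝ Z]
    (U : Set E) (hU : IsOpen U) (K : Set E) (hK : IsCompact K) (hKU : K ⊆ U)
    (f : E → Z) (hf : ContinuousOn f U)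
    (df : E × E → Z) (hdf : ContinuousOn df (U ×ˢ Set.univ))
    (hderiv : ∀ x ∈ U, ∀ y : E,
      Filter.Tendsto (fun τ : ℝ => τ⁻¹ • (f (x + τ • y) - f x))
        (nhdsWithin 0 {(0 : ℝ)}ᶜ) (nhds (df (x, y)))) :
    ∃ P : Seminorm ℝ E, Continuous P ∧
      (∀ x : E, (∃ k ∈ K, P (x - k) < 1) → x ∈ U) ∧
      ∀ p : Seminorm ℝ E, Continuous p → (∀ x, P x ≤ p x) →
        ∀ y z : E, (∃ k ∈ K, p (y - k) < 1) → (∃ k ∈ K, p (z - k) < 1) →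
          ‖f z - f y‖ ≤ p (z - y) := by
  have hline : ∀ x ∈ U, ∀ v, HasLineDerivAt ℝ f (df (x, v)) x v := fun x hx v ↦
    hasLineDerivAt_iff_tendsto_slope_zero.mpr (hderiv x hx v)
  obtain ⟨C, hC⟩ := hK.exists_bound_of_continuousOn (hf.mono hKU)
  obtain ⟨M, hM⟩ : ∃ M : ℝ≥0, ∀ k ∈ K, ‖f k‖ < M :=
    ⟨C.toNNReal + 1, fun k hk ↦ by push_cast; linarith [hC k hk, C.le_coe_toNNReal]⟩
  have hKS : K ×ˢ {0} ⊆ {w : E × E | w.1 ∈ U ∧ ‖f w.1‖ < M ∧ ‖df w‖ < 1} := by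
    rintro ⟨k, v⟩ ⟨hk, rfl : v = 0⟩
    exact ⟨hKU hk, hM k hk, by simp [(hline k (hKU hk) 0).unique hasLineDerivAt_zero]⟩
  obtain ⟨q, hqc, hq⟩ := hK.exists_continuous_seminorm_of_prod_subset
    (isOpen_setOf_norm_lt_of_continuousOn hU hf hdf M) hKS
  have hnear : ∀ k ∈ K, ∀ x, q (x - k) < 1 → x ∈ U ∧ ‖f x‖ < M ∧ ∀ v, ‖df (x, v)‖ ≤ q v := by
    intro k hk x hx
    obtain ⟨hxU, hfx, -⟩ := hq k hk x 0 hx (by simp)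
    refine ⟨hxU, hfx, norm_le_seminorm_of_forall_lt_one (fun c _ v ↦ ?_) fun v hv ↦
      (hq k hk x v hx hv).2.2.le⟩
    exact ((hline x hxU v).smul c).unique (hline x hxU (c • v)) |>.symm
  refine ⟨(2 * M + 1) • q, hqc.const_smul _, fun x ⟨k, hk, hx⟩ ↦ ?_,
    fun p _ hp y z ⟨k, hk, hy⟩ ⟨k', hk', hz⟩ ↦
      norm_sub_le_seminorm_of_near_compact hline hnear hp hk hk' hy hz⟩
  exact (hnear k hk x ((q.apply_le_smul_apply_of_one_le le_add_self _).trans_lt hx)).1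

/-- A `C¹`-map (in the sense of Keller's `C¹_c`-theory) from an open subset of a
locally convex space into a Banach space satisfies, near any compact subset `K`
of its domain, the Lipschitz estimate `‖f z − f y‖ ≤ p (z − y)` on the
`p`-neighbourhood `V_p = K + B^p_1(0)`, for every continuous seminorm `p ≥ P`,
where `P` is a suitable continuous seminorm with `K + B^P_1(0) ⊆ U`. -/
theorem lipschitz_seminorm_estimate_of_C1
    {E : Type*} [AddCommGroup E] [Module ℝ E] [TopologicalSpace E]
    [IsTopologicalAddGroup E] [ContinuousSMul ℝ E] [LocallyConvexSpace ℝ E]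
    {Z : Type*} [NormedAddCommGroup Z] [NormedSpace ℝ Z] [CompleteSpace Z]
    (U : Set E) (hU : IsOpen U) (K : Set E) (hK : IsCompact K) (hKU : K ⊆ U)
    (f : E → Z) (hf : ContinuousOn f U)
    (df : E × E → Z) (hdf : ContinuousOn df (U ×ˢ Set.univ))
    (hderiv : ∀ x ∈ U, ∀ y : E,
      Filter.Tendsto (fun τ : ℝ => τ⁻¹ • (f (x + τ • y) - f x))
        (nhdsWithin 0 {(0 : ℝ)}ᶜ) (nhds (df (x, y)))) :
    ∃ P : Seminorm ℝ E, Continuous P ∧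
      (∀ x : E, (∃ k ∈ K, P (x - k) < 1) → x ∈ U) ∧
      ∀ p : Seminorm ℝ E, Continuous p → (∀ x, P x ≤ p x) →
        ∀ y z : E, (∃ k ∈ K, p (y - k) < 1) → (∃ k ∈ K, p (z - k) < 1) →
          ‖f z - f y‖ ≤ p (z - y) :=
  lipschitz_seminorm_estimate_of_C1_general U hU K hK hKU f hf df hdf hderiv
end
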